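/- arXiv:2506.13718 — 5 statements merged into one kernel-verified Lean document; each statement's English description precedes it below -/
import Mathlib

section
/- Let Q ⊂ ℝ^d be a cube of side length r > 0 and for a function f on Q let f_Q denote its value at the center of Q. For all Lipschitz maps f, g : Q → ℝ and π, κ : Q → ℝ^d, one has |∫_Q f det Dπ − ∫_Q g det Dκ| ≤ r^{d+1} (Lip(f)+Lip(g)) (√d/2) L^d + r^d |f_Q − g_Q| L^d + r^{d−1} |f_Q| c_d L^{d−1} sup_{∂Q} ‖π − κ‖, where L is the maximum of the Lipschitz constants of all coordinates of π and κ, and c_d is the constant from the boundary estimate for integrals of Jacobians. -/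
/-!
Freeze the coefficients at the centre of `Q`:
`f det Dπ - g det Dκ = (f - f_Q) det Dπ - (g - g_Q) det Dκ + (f_Q - g_Q) det Dκ
  + f_Q (det Dπ - det Dκ)`.
Hadamard's inequality bounds `|det Dπ|` and `|det Dκ|` by `L^d`, since every row of the
Jacobian has norm at most `L`; on `Q` the oscillation of `f` is at most `Lip(f) √d r / 2`.
This bounds the first three integrals, and the last one is the boundary estimate.
-/

open MeasureTheory
open scoped NNReal

namespace LinearMap

variable {E : Type*} [NormedAddCommGroup E] [InnerProductSpace ℝ E] [FiniteDimensional ℝ E]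

theorem det_adjoint (A : E →ₗ[ℝ] E) : (adjoint A).det = A.det := by
  let b := stdOrthonormalBasis ℝ E
  rw [← det_toMatrix b.toBasis, ← det_toMatrix b.toBasis, toMatrix_adjoint,
    Matrix.det_conjTranspose, star_trivial]

end LinearMap

/-- Hadamard's inequality for the rows of `A`, which are the vectors `A† (b i)`. -/
theorem OrthonormalBasis.abs_det_le_prod_norm_adjoint_apply {E : Type*} [NormedAddCommGroup E]
    [InnerProductSpace ℝ E] [FiniteDimensional ℝ E] {n : ℕ} [Fact (Module.finrank ℝ E = n)]
    (b : OrthonormalBasis (Fin n) ℝ E) (A : E →L[ℝ] E) :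
    |A.det| ≤ ∏ i, ‖ContinuousLinearMap.adjoint A (b i)‖ := by
  have hdet : A.det = b.toBasis.det (ContinuousLinearMap.adjoint A ∘ b) := by
    have := b.toBasis.det_comp (LinearMap.adjoint (A : E →ₗ[ℝ] E)) b.toBasis
    rw [Module.Basis.det_self, mul_one] at this
    rw [ContinuousLinearMap.det, ← LinearMap.det_adjoint, ← this, b.coe_toBasis]
    rfl
  rw [hdet, ← b.toBasis.orientation.volumeForm_robust' b]
  exact b.toBasis.orientation.abs_volumeForm_apply_le _

theorem EuclideanSpace.norm_adjoint_apply_single {ι : Type*} [Fintype ι] [DecidableEq ι]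
    (A : EuclideanSpace ℝ ι →L[ℝ] EuclideanSpace ℝ ι) (j : ι) :
    ‖ContinuousLinearMap.adjoint A (EuclideanSpace.single j 1)‖
      = ‖(EuclideanSpace.proj j).comp A‖ := by
  rw [← innerSL_apply_norm ℝ]
  congr 1
  ext v
  simp [ContinuousLinearMap.adjoint_inner_left, EuclideanSpace.inner_single_left]

theorem EuclideanSpace.norm_le_sqrt_card_mul {ι : Type*} [Fintype ι] {x : EuclideanSpace ℝ ι}
    {a : ℝ} (ha : 0 ≤ a) (hx : ∀ i, |x i| ≤ a) : ‖x‖ ≤ √(Fintype.card ι) * a := by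
  rw [EuclideanSpace.norm_eq, ← Real.sqrt_sq ha, ← Real.sqrt_mul (Nat.cast_nonneg _)]
  gcongr
  calc ∑ i, ‖x i‖ ^ 2 ≤ ∑ _i : ι, a ^ 2 := by
        gcongr with i
        rw [Real.norm_eq_abs]
        exact hx i
    _ = Fintype.card ι * a ^ 2 := by simp

theorem abs_det_fderiv_le_of_lipschitzWith_apply {d : ℕ}
    {π : EuclideanSpace ℝ (Fin d) → EuclideanSpace ℝ (Fin d)} {L : ℝ≥0}
    (hπ : ∀ j, LipschitzWith L fun x => π x j) (x : EuclideanSpace ℝ (Fin d)) :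
    |(fderiv ℝ π x).det| ≤ (L : ℝ) ^ d := by
  have : Fact (Module.finrank ℝ (EuclideanSpace ℝ (Fin d)) = d) := ⟨finrank_euclideanSpace_fin⟩
  have hrow : ∀ j, ‖(EuclideanSpace.proj (𝕜 := ℝ) j).comp (fderiv ℝ π x)‖ ≤ L := by
    intro j
    by_cases hx : DifferentiableAt ℝ π x
    · have hj : HasFDerivAt (fun y => π y j)
          ((EuclideanSpace.proj (𝕜 := ℝ) j).comp (fderiv ℝ π x)) x :=
        (EuclideanSpace.proj (𝕜 := ℝ) j).hasFDerivAt.comp x hx.hasFDerivAt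
      exact hj.le_of_lipschitz (hπ j)
    · rw [fderiv_zero_of_not_differentiableAt hx, ContinuousLinearMap.comp_zero, norm_zero]
      exact L.coe_nonneg
  calc |(fderiv ℝ π x).det|
      ≤ ∏ j, ‖ContinuousLinearMap.adjoint (fderiv ℝ π x) (EuclideanSpace.basisFun (Fin d) ℝ j)‖ :=
        OrthonormalBasis.abs_det_le_prod_norm_adjoint_apply _ _
    _ ≤ ∏ _j : Fin d, (L : ℝ) := by
        gcongr with j
        rw [EuclideanSpace.basisFun_apply, EuclideanSpace.norm_adjoint_apply_single]
        exact hrow j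
    _ = (L : ℝ) ^ d := by simp

section Cube

variable {ι : Type*} [Fintype ι]

def EuclideanSpace.cube (p : EuclideanSpace ℝ ι) (r : ℝ) : Set (EuclideanSpace ℝ ι) :=
  {x | ∀ i, p i ≤ x i ∧ x i ≤ p i + r}

omit [Fintype ι] in
theorem EuclideanSpace.cube_eq_preimage (p : EuclideanSpace ℝ ι) (r : ℝ) :
    cube p r = (MeasurableEquiv.toLp 2 (ι → ℝ)).symm ⁻¹'
      Set.univ.pi fun i => Set.Icc (p i) (p i + r) := by
  ext x
  simp only [cube, Set.mem_ofPred_eq, Set.mem_preimage, Set.mem_pi, Set.mem_univ,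
    forall_true_left, Set.mem_Icc]
  rfl

theorem EuclideanSpace.measurableSet_cube (p : EuclideanSpace ℝ ι) (r : ℝ) :
    MeasurableSet (cube p r) := by
  rw [cube_eq_preimage]
  exact (MeasurableEquiv.toLp 2 (ι → ℝ)).symm.measurable
    (MeasurableSet.univ_pi fun i => measurableSet_Icc)

theorem EuclideanSpace.volume_cube (p : EuclideanSpace ℝ ι) (r : ℝ) :
    volume (cube p r) = ENNReal.ofReal r ^ Fintype.card ι := by
  rw [cube_eq_preimage,
    (volume_preserving_symm_measurableEquiv_toLp ι).measure_preimage
      (MeasurableSet.univ_pi fun i => measurableSet_Icc).nullMeasurableSet,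
    volume_pi_pi]
  simp [Real.volume_Icc]

theorem EuclideanSpace.norm_sub_le_of_mem_cube {p c x : EuclideanSpace ℝ ι} {r : ℝ} (hr : 0 ≤ r)
    (hc : ∀ i, c i = p i + r / 2) (hx : x ∈ cube p r) :
    ‖x - c‖ ≤ √(Fintype.card ι) * (r / 2) := by
  refine norm_le_sqrt_card_mul (by positivity) fun i => ?_
  rw [PiLp.sub_apply, hc i, abs_le]
  constructor <;> linarith [hx i]

end Cube

theorem abs_setIntegral_mul_sub_const_mul_le {X : Type*} [MeasurableSpace X] {μ : Measure X}
    {s : Set X} (hs : MeasurableSet s) (hμs : μ s < ⊤) {f J : X → ℝ}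
    (hf : AEStronglyMeasurable f (μ.restrict s)) (hJ : AEStronglyMeasurable J (μ.restrict s))
    {a A M : ℝ} (hfa : ∀ x ∈ s, |f x - a| ≤ A) (hJM : ∀ x ∈ s, |J x| ≤ M) :
    |(∫ x in s, f x * J x ∂μ) - a * ∫ x in s, J x ∂μ| ≤ A * M * μ.real s := by
  have hbound : ∀ x ∈ s, ‖(f x - a) * J x‖ ≤ A * M := fun x hx => by
    rw [Real.norm_eq_abs, abs_mul]
    exact mul_le_mul (hfa x hx) (hJM x hx) (abs_nonneg _) ((abs_nonneg _).trans (hfa x hx))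
  have hJint : IntegrableOn J s μ :=
    .of_bound hμs hJ M
      (ae_restrict_of_forall_mem hs fun x hx => (Real.norm_eq_abs _).trans_le (hJM x hx))
  have hfJint : IntegrableOn (fun x => (f x - a) * J x) s μ :=
    .of_bound hμs ((hf.sub aestronglyMeasurable_const).mul hJ) (A * M)
      (ae_restrict_of_forall_mem hs hbound)
  have hsplit : (∫ x in s, f x * J x ∂μ) - a * ∫ x in s, J x ∂μ
      = ∫ x in s, (f x - a) * J x ∂μ := by
    rw [← integral_const_mul, sub_eq_iff_eq_add, ← integral_add hfJint (hJint.const_mul a)]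
    simp only [sub_mul, sub_add_cancel]
  rw [hsplit, ← Real.norm_eq_abs]
  exact norm_setIntegral_le_of_norm_le_const hμs hbound

theorem abs_sub_le_abs_sub_mul_add (x y u v a b : ℝ) :
    |x - y| ≤ |x - a * u| + |y - b * v| + |a - b| * |v| + |a| * |u - v| := by
  rw [← abs_mul, ← abs_mul]
  calc |x - y| = |(x - a * u) - (y - b * v) + (a - b) * v + a * (u - v)| := by ring_nf
    _ ≤ _ := (abs_add_le _ _).trans (add_le_add_left
          ((abs_add_le _ _).trans (add_le_add_left (abs_sub _ _) _)) _)

/-- Let `Q ⊆ ℝ^d` be a cube of side length `r > 0` with centre `cQ`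
and write `f_Q = f cQ`.  Assume `c_d` is a constant for which the boundary estimate
for integrals of Jacobians holds on `Q`.  Then for Lipschitz `f, g : Q → ℝ` and
`π, κ : Q → ℝ^d`,
`|∫_Q f det Dπ − ∫_Q g det Dκ| ≤ r^{d+1}(Lip f + Lip g)(√d/2)L^d + r^d |f_Q − g_Q| L^d
  + r^{d−1} |f_Q| c_d L^{d−1} sup_{∂Q} ‖π − κ‖`. -/
theorem statement3 (d : ℕ) (p : EuclideanSpace ℝ (Fin d)) (r : ℝ) (hr : 0 < r)
    (Q : Set (EuclideanSpace ℝ (Fin d)))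
    (hQ : Q = {x : EuclideanSpace ℝ (Fin d) | ∀ i, p i ≤ x i ∧ x i ≤ p i + r})
    (cQ : EuclideanSpace ℝ (Fin d)) (hcQ : ∀ i, cQ i = p i + r / 2)
    (cd : ℝ)
    (hcd : ∀ (π κ : EuclideanSpace ℝ (Fin d) → EuclideanSpace ℝ (Fin d)) (L' : ℝ≥0),
      (∀ j, LipschitzWith L' fun x => π x j) →
      (∀ j, LipschitzWith L' fun x => κ x j) →
      |(∫ x in Q, (fderiv ℝ π x).det) - ∫ x in Q, (fderiv ℝ κ x).det|
        ≤ cd * (L' : ℝ) ^ (d - 1) * r ^ (d - 1) *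
          sSup ((fun x => ‖π x - κ x‖) '' frontier Q))
    (f g : EuclideanSpace ℝ (Fin d) → ℝ) (Kf Kg : ℝ≥0)
    (hf : LipschitzWith Kf f) (hg : LipschitzWith Kg g)
    (π κ : EuclideanSpace ℝ (Fin d) → EuclideanSpace ℝ (Fin d)) (L : ℝ≥0)
    (hπ : ∀ j, LipschitzWith L fun x => π x j)
    (hκ : ∀ j, LipschitzWith L fun x => κ x j) :
    |(∫ x in Q, f x * (fderiv ℝ π x).det) - ∫ x in Q, g x * (fderiv ℝ κ x).det|
      ≤ r ^ (d + 1) * ((Kf : ℝ) + (Kg : ℝ)) * (Real.sqrt d / 2) * (L : ℝ) ^ d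
        + r ^ d * |f cQ - g cQ| * (L : ℝ) ^ d
        + r ^ (d - 1) * |f cQ| * cd * (L : ℝ) ^ (d - 1) *
          sSup ((fun x => ‖π x - κ x‖) '' frontier Q) := by
  have hQcube : Q = EuclideanSpace.cube p r := hQ
  have hQm : MeasurableSet Q := hQcube ▸ EuclideanSpace.measurableSet_cube p r
  have hQfin : volume Q < ⊤ := by
    rw [hQcube, EuclideanSpace.volume_cube]
    exact ENNReal.pow_lt_top ENNReal.ofReal_lt_top
  have hQvol : volume.real Q = r ^ d := by
    rw [measureReal_def, hQcube, EuclideanSpace.volume_cube, ENNReal.toReal_pow,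
      ENNReal.toReal_ofReal hr.le, Fintype.card_fin]
  have hosc : ∀ {h : EuclideanSpace ℝ (Fin d) → ℝ} {K : ℝ≥0}, LipschitzWith K h →
      ∀ x ∈ Q, |h x - h cQ| ≤ K * (√d * (r / 2)) := fun hh x hx => by
    have hxc := EuclideanSpace.norm_sub_le_of_mem_cube hr.le hcQ (hQcube ▸ hx)
    rw [Fintype.card_fin] at hxc
    calc |_ - _| = dist _ _ := (Real.dist_eq _ _).symm
      _ ≤ _ := (hh.dist_le_mul x cQ).trans (by rw [dist_eq_norm]; gcongr)
  have hJ : ∀ {σ : EuclideanSpace ℝ (Fin d) → EuclideanSpace ℝ (Fin d)},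
      AEStronglyMeasurable (fun x => (fderiv ℝ σ x).det) (volume.restrict Q) := fun {σ} =>
    (ContinuousLinearMap.continuous_det.measurable.comp
      (measurable_fderiv ℝ σ)).aestronglyMeasurable
  have hIκ : |∫ x in Q, (fderiv ℝ κ x).det| ≤ (L : ℝ) ^ d * r ^ d := by
    rw [← hQvol, ← Real.norm_eq_abs]
    exact norm_setIntegral_le_of_norm_le_const hQfin fun x _ =>
      (Real.norm_eq_abs _).trans_le (abs_det_fderiv_le_of_lipschitzWith_apply hκ x)
  calc _ ≤ _ := abs_sub_le_abs_sub_mul_add _ _ _ _ (f cQ) (g cQ)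
    _ ≤ Kf * (√d * (r / 2)) * L ^ d * volume.real Q
        + Kg * (√d * (r / 2)) * L ^ d * volume.real Q
        + |f cQ - g cQ| * (L ^ d * r ^ d)
        + |f cQ| * (cd * L ^ (d - 1) * r ^ (d - 1) *
          sSup ((fun x => ‖π x - κ x‖) '' frontier Q)) := by
      gcongr
      · exact abs_setIntegral_mul_sub_const_mul_le hQm hQfin hf.continuous.aestronglyMeasurable hJ
          (hosc hf) fun x _ => abs_det_fderiv_le_of_lipschitzWith_apply hπ x
      · exact abs_setIntegral_mul_sub_const_mul_le hQm hQfin hg.continuous.aestronglyMeasurable hJ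
          (hosc hg) fun x _ => abs_det_fderiv_le_of_lipschitzWith_apply hκ x
      · exact hcd π κ L hπ hκ
    _ = _ := by rw [hQvol, pow_succ]; ring
end

section
/- Let X, Y be Banach spaces and T : X → Y* a bounded linear operator that is strongly non-surjective, i.e., for every n ∈ ℕ there exist ρ_n ∈ T(X) with ‖ρ_n‖ ≤ 1/n and a weak*-open neighborhood U_n of ρ_n with U_n ∩ T(B_X) = ∅. Then there exists a sequence v_n ∈ Y with ‖v_n‖_Y ≥ 1 and sup_{x ∈ B_X} |⟨T(x), v_n⟩| ≤ 1/n for every n. -/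
open NormedSpace

/-! The weak* topology is locally convex and its continuous functionals are evaluations at points
of `Y`, so Hahn–Banach separates the weak* closure of the absolutely convex set `T(B_X)` from any
`ρ` that has a weak*-neighbourhood missing it, by some `v ∈ Y` with `|⟨T x, v⟩| ≤ 1 < ⟨ρ, v⟩`.
Since `⟨ρ, v⟩ ≤ ‖ρ‖ ‖v‖ ≤ ‖v‖ / n`, the vector `v / n` has norm at least `1`. -/

theorem WeakDual.exists_abs_apply_lt_one_lt_apply {Y : Type*} [AddCommGroup Y]
    [TopologicalSpace Y] [Module ℝ Y] {s : Set (WeakDual ℝ Y)}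
    (hs : Convex ℝ s) (hs_neg : ∀ ψ ∈ s, -ψ ∈ s) (hs_ne : s.Nonempty) {φ : WeakDual ℝ Y}
    (hφ : φ ∉ closure s) : ∃ v : Y, (∀ ψ ∈ s, |ψ v| < 1) ∧ 1 < φ v := by
  have : LocallyConvexSpace ℝ (WeakDual ℝ Y) :=
    WeakBilin.locallyConvexSpace (B := topDualPairing ℝ Y)
  obtain ⟨f, u, hf_lt, hu_lt⟩ :=
    geometric_hahn_banach_closed_point hs.closure isClosed_closure hφ
  obtain ⟨v, rfl⟩ := LinearMap.dualEmbedding_surjective (topDualPairing ℝ Y) f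
  have hs_lt : ∀ ψ ∈ s, |ψ v| < u := fun ψ hψ ↦ abs_lt.2
    ⟨neg_lt.1 (hf_lt _ (subset_closure (hs_neg ψ hψ))), hf_lt ψ (subset_closure hψ)⟩
  obtain ⟨ψ₀, hψ₀⟩ := hs_ne
  have hu : 0 < u := (abs_nonneg _).trans_lt (hs_lt ψ₀ hψ₀)
  refine ⟨u⁻¹ • v, fun ψ hψ ↦ ?_, ?_⟩
  · rw [map_smul, smul_eq_mul, abs_mul, abs_inv, abs_of_pos hu, inv_mul_lt_one₀ hu]
    exact hs_lt ψ hψ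
  · rw [map_smul, smul_eq_mul, lt_inv_mul_iff₀ hu, mul_one]
    exact hu_lt

theorem ContinuousLinearMap.exists_abs_apply_le_one_lt_apply_of_isOpen {X Y : Type*}
    [NormedAddCommGroup X] [NormedSpace ℝ X] [NormedAddCommGroup Y] [NormedSpace ℝ Y]
    (T : X →L[ℝ] StrongDual ℝ Y) {U : Set (WeakDual ℝ Y)} (hU : IsOpen U) {φ : WeakDual ℝ Y}
    (hφ : φ ∈ U) (hTU : ∀ x : X, ‖x‖ ≤ 1 → StrongDual.toWeakDual (T x) ∉ U) :
    ∃ v : Y, (∀ x : X, ‖x‖ ≤ 1 → |T x v| ≤ 1) ∧ 1 < φ v := by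
  set G : X →ₗ[ℝ] WeakDual ℝ Y :=
    (StrongDual.toWeakDual : StrongDual ℝ Y ≃ₗ[ℝ] WeakDual ℝ Y).toLinearMap ∘ₗ T.toLinearMap
  have hneg : ∀ ψ ∈ G '' Metric.closedBall 0 1, -ψ ∈ G '' Metric.closedBall 0 1 := by
    rintro _ ⟨x, hx, rfl⟩
    exact ⟨-x, by simpa using hx, map_neg G x⟩
  have hφ_notMem : φ ∉ closure (G '' Metric.closedBall 0 1) := fun h ↦ by
    obtain ⟨_, hψU, x, hx, rfl⟩ := mem_closure_iff.1 h U hU hφ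
    exact hTU x (by simpa using hx) hψU
  obtain ⟨v, hv, hφv⟩ := WeakDual.exists_abs_apply_lt_one_lt_apply
    ((convex_closedBall 0 1).linear_image G) hneg
    ((Metric.nonempty_closedBall.2 zero_le_one).image G) hφ_notMem
  exact ⟨v, fun x hx ↦ (hv (G x) ⟨x, by simpa using hx, rfl⟩).le, hφv⟩

theorem statement7_general (X Y : Type*)
    [NormedAddCommGroup X] [NormedSpace ℝ X]
    [NormedAddCommGroup Y] [NormedSpace ℝ Y]
    (T : X →L[ℝ] StrongDual ℝ Y)
    (hT : ∀ n : ℕ, 0 < n → ∃ (ρ : StrongDual ℝ Y) (U : Set (WeakDual ℝ Y)),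
      (∃ x, T x = ρ) ∧ ‖ρ‖ ≤ 1 / n ∧ IsOpen U ∧
      StrongDual.toWeakDual ρ ∈ U ∧
      ∀ x : X, ‖x‖ ≤ 1 → StrongDual.toWeakDual (T x) ∉ U) :
    ∃ v : ℕ → Y, ∀ n : ℕ, 0 < n →
      1 ≤ ‖v n‖ ∧ ∀ x : X, ‖x‖ ≤ 1 → |T x (v n)| ≤ 1 / n := by
  have key : ∀ n : ℕ, 0 < n → ∃ w : Y, 1 ≤ ‖w‖ ∧ ∀ x : X, ‖x‖ ≤ 1 → |T x w| ≤ 1 / n := by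
    intro n hn
    obtain ⟨ρ, U, -, hρ, hU, hρU, hTU⟩ := hT n hn
    obtain ⟨v, hTv, hρv⟩ := T.exists_abs_apply_le_one_lt_apply_of_isOpen hU hρU hTU
    refine ⟨(1 / n : ℝ) • v, ?_, fun x hx ↦ ?_⟩
    · calc 1 ≤ ρ v := hρv.le
        _ ≤ ‖ρ‖ * ‖v‖ := (le_abs_self _).trans (ρ.le_opNorm v)
        _ ≤ 1 / n * ‖v‖ := by gcongr
        _ = ‖(1 / n : ℝ) • v‖ := by rw [norm_smul, Real.norm_of_nonneg (by positivity)]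
    · rw [map_smul, smul_eq_mul, abs_mul, abs_of_nonneg (by positivity)]
      exact mul_le_of_le_one_right (by positivity) (hTv x hx)
  choose! v hv using key
  exact ⟨v, hv⟩

/-- **predual separation theorem.**
Let `X, Y` be Banach spaces and `T : X → Y*` a bounded linear operator which is
strongly non-surjective: for every `n ≥ 1` there are `ρ_n ∈ T(X)` with
`‖ρ_n‖ ≤ 1/n` and a weak*-open neighbourhood `U_n` of `ρ_n` with
`U_n ∩ T(B_X) = ∅`.  Then there is a sequence `v_n ∈ Y` with `‖v_n‖ ≥ 1` and
`sup_{x ∈ B_X} |⟨T x, v_n⟩| ≤ 1/n`. -/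
theorem statement7 (X Y : Type*)
    [NormedAddCommGroup X] [NormedSpace ℝ X] [CompleteSpace X]
    [NormedAddCommGroup Y] [NormedSpace ℝ Y] [CompleteSpace Y]
    (T : X →L[ℝ] StrongDual ℝ Y)
    (hT : ∀ n : ℕ, 0 < n → ∃ (ρ : StrongDual ℝ Y) (U : Set (WeakDual ℝ Y)),
      (∃ x, T x = ρ) ∧ ‖ρ‖ ≤ 1 / n ∧ IsOpen U ∧
      StrongDual.toWeakDual ρ ∈ U ∧
      ∀ x : X, ‖x‖ ≤ 1 → StrongDual.toWeakDual (T x) ∉ U) :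
    ∃ v : ℕ → Y, ∀ n : ℕ, 0 < n →
      1 ≤ ‖v n‖ ∧ ∀ x : X, ‖x‖ ≤ 1 → |T x (v n)| ≤ 1 / n :=
  statement7_general X Y T hT
end

section
/- Let d ≥ 1 and let (f_i, π_i) be a regular formal Lipschitz sum on [0,1]^d with L_i := Lip(π_i^1) = ⋯ = Lip(π_i^d) and S := Σ_i L_i^d < ∞. Define h : [0,1]^d → ℓ² by h(x) = Σ_{j=1}^d x_j e_j + Σ_{i=1}^∞ Σ_{j=1}^d L_i^{d/2 − 1} π_i^j(x) e_{di+j}. Then h is well-defined, and for every n ≥ d the composition P_n ∘ h with the orthogonal projection P_n : ℓ² → span{e₁,…,e_n} is L-biLipschitz with L = √(1 + dS). -/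
open scoped NNReal BigOperators



lemma st9_fiber_sum (c : ℕ) (g : ℕ → ℝ) (hg : ∀ b, 0 ≤ g b) {S : ℝ}
    (hS : HasSum g S) (σ lo : ℕ → ℕ)
    (hσ : ∀ k, lo (σ k) ≤ k ∧ k < lo (σ k) + c) (s : Finset ℕ) :
    ∑ k ∈ s, g (σ k) ≤ c * S := by
  rw [Finset.sum_comp]
  have hcard : ∀ b, (s.filter fun k => σ k = b).card ≤ c := by
    intro b
    have hsub : (s.filter fun k => σ k = b) ⊆ Finset.Ico (lo b) (lo b + c) := by
      intro k hk
      simp only [Finset.mem_filter] at hk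
      rcases hk with ⟨-, rfl⟩
      simpa [Finset.mem_Ico] using hσ k
    calc (s.filter fun k => σ k = b).card ≤ (Finset.Ico (lo b) (lo b + c)).card :=
          Finset.card_le_card hsub
      _ = c := by simp
  calc ∑ b ∈ s.image σ, (s.filter fun k => σ k = b).card • g b
      ≤ ∑ b ∈ s.image σ, (c : ℝ) * g b := by
        refine Finset.sum_le_sum fun b _ => ?_
        rw [nsmul_eq_mul]
        exact mul_le_mul_of_nonneg_right (by exact_mod_cast hcard b) (hg b)
    _ = c * ∑ b ∈ s.image σ, g b := by rw [Finset.mul_sum]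
    _ ≤ c * S := by
        refine mul_le_mul_of_nonneg_left ?_ (by positivity)
        exact sum_le_hasSum _ (fun b _ => hg b) hS

lemma st9_div_bounds (d : ℕ) (hd : 1 ≤ d) (k : ℕ) :
    d * (k / d) ≤ k ∧ k < d * (k / d) + d := by
  obtain ⟨q, r, hr, rfl⟩ : ∃ q r, r < d ∧ k = d * q + r :=
    ⟨k / d, k % d, Nat.mod_lt _ (by omega), (Nat.div_add_mod k d).symm⟩
  have hq : (d * q + r) / d = q := by
    rw [Nat.mul_add_div (by omega), Nat.div_eq_of_lt hr, Nat.add_zero]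
  rw [hq]
  exact ⟨Nat.le_add_right _ _, Nat.add_lt_add_left hr _⟩

lemma st9_key_aux (d : ℕ) (hd : 1 ≤ d) (Lr : ℝ) (hL : 0 ≤ Lr) (a b r : ℝ)
    (hab : |a - b| ≤ Lr * r) (hr : 0 ≤ r) :
    (Lr ^ ((d : ℝ) / 2 - 1) * a - Lr ^ ((d : ℝ) / 2 - 1) * b) ^ 2 ≤ Lr ^ d * r ^ 2 := by
  rcases eq_or_lt_of_le hL with h0 | hpos
  · have hab' : a = b := by
      have : |a - b| ≤ 0 := by rw [← h0] at hab; simpa using hab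
      have := abs_nonneg (a - b)
      have : |a - b| = 0 := le_antisymm ‹_› ‹_›
      have := abs_eq_zero.mp this
      linarith [this]
    rw [hab']
    simp only [sub_self]
    rw [← h0, zero_pow (by omega : d ≠ 0)]
    simp
  · rw [← mul_sub, mul_pow]
    have h1 : (Lr ^ ((d : ℝ) / 2 - 1)) ^ 2 = Lr ^ ((d : ℝ) - 2) := by
      rw [← Real.rpow_natCast (Lr ^ ((d : ℝ) / 2 - 1)) 2, ← Real.rpow_mul hL]
      norm_num
      ring_nf
    have h2 : (a - b) ^ 2 ≤ (Lr * r) ^ 2 := by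
      calc (a - b) ^ 2 = |a - b| ^ 2 := (sq_abs _).symm
        _ ≤ (Lr * r) ^ 2 := pow_le_pow_left₀ (abs_nonneg _) hab 2
    calc (Lr ^ ((d : ℝ) / 2 - 1)) ^ 2 * (a - b) ^ 2
        ≤ Lr ^ ((d : ℝ) - 2) * (Lr * r) ^ 2 := by
          rw [h1]
          exact mul_le_mul_of_nonneg_left h2 (Real.rpow_nonneg hL _)
      _ = Lr ^ d * r ^ 2 := by
          rw [mul_pow, ← mul_assoc, ← Real.rpow_natCast Lr 2, ← Real.rpow_add hpos,
            ← Real.rpow_natCast Lr d]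
          norm_num

/-- Let `(f_i, π_i)` be a regular formal Lipschitz sum on
`[0,1]^d` with `L_i = Lip(π_i^j)` for all `j`, `π_i 0 = 0`, and
`S = Σ_i L_i^d < ∞`.  Define `h : [0,1]^d → ℓ²` by
`h x = Σ_{j<d} x_j e_j + Σ_i Σ_j L_i^{d/2−1} π_i^j(x) e_{di+j}`.  Then `h` is
well-defined (its values lie in `ℓ²`), and for every `n ≥ d` the composition
`P_n ∘ h` with the orthogonal projection onto the first `n` coordinates is
`L`-biLipschitz with `L = √(1 + dS)`. -/
theorem statement9 (d : ℕ) (hd : 1 ≤ d)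
    (Q : Set (EuclideanSpace ℝ (Fin d)))
    (hQ : Q = {x : EuclideanSpace ℝ (Fin d) | ∀ j, 0 ≤ x j ∧ x j ≤ 1})
    (f : ℕ → EuclideanSpace ℝ (Fin d) → ℝ)
    (hf : ∀ i, LipschitzWith 1 (f i) ∧ ∀ x, |f i x| ≤ 1)
    (π : ℕ → EuclideanSpace ℝ (Fin d) → EuclideanSpace ℝ (Fin d))
    (L : ℕ → ℝ≥0)
    (hπ : ∀ i j, LipschitzWith (L i) fun x => π i x j)
    (hπ0 : ∀ i, π i 0 = 0)
    (S : ℝ) (hS : HasSum (fun i => (L i : ℝ) ^ d) S)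
    (h : EuclideanSpace ℝ (Fin d) → ℕ → ℝ)
    (hh : ∀ x m, h x m = if hm : m < d then x ⟨m, hm⟩
      else (L ((m - d) / d) : ℝ) ^ ((d : ℝ) / 2 - 1) *
        π ((m - d) / d) x ⟨(m - d) % d, Nat.mod_lt _ (by omega)⟩) :
    (∀ x, Memℓp (h x) 2) ∧
      ∀ n, d ≤ n → ∀ x ∈ Q, ∀ y ∈ Q,
        (1 / Real.sqrt (1 + (d : ℝ) * S)) * ‖x - y‖ ≤
            Real.sqrt (∑ m ∈ Finset.range n, (h x m - h y m) ^ 2) ∧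
          Real.sqrt (∑ m ∈ Finset.range n, (h x m - h y m) ^ 2) ≤
            Real.sqrt (1 + (d : ℝ) * S) * ‖x - y‖ := by
  have hS0 : 0 ≤ S := by
    rw [← hS.tsum_eq]; exact tsum_nonneg fun i => by positivity
  -- key pointwise estimate
  have key : ∀ (x y : EuclideanSpace ℝ (Fin d)) m, d ≤ m →
      (h x m - h y m) ^ 2 ≤ (L ((m - d) / d) : ℝ) ^ d * ‖x - y‖ ^ 2 := by
    intro x y m hm
    have hmd : ¬ m < d := by omega
    rw [hh, hh, dif_neg hmd, dif_neg hmd]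
    have hlip := (hπ ((m - d) / d)
      ⟨(m - d) % d, Nat.mod_lt _ (by omega)⟩).dist_le_mul x y
    rw [Real.dist_eq, dist_eq_norm] at hlip
    exact st9_key_aux d hd _ (L _).coe_nonneg _ _ _ hlip (norm_nonneg _)
  have h0 : ∀ m, d ≤ m → h 0 m = 0 := by
    intro m hm
    rw [hh, dif_neg (by omega)]
    simp [hπ0]
  have base : ∀ x y : EuclideanSpace ℝ (Fin d),
      ∑ m ∈ Finset.range d, (h x m - h y m) ^ 2 = ‖x - y‖ ^ 2 := by
    intro x y
    rw [← Fin.sum_univ_eq_sum_range (fun m => (h x m - h y m) ^ 2) d]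
    have hcoord : ∀ j : Fin d, h x j - h y j = x j - y j := by
      intro j
      rw [hh, hh, dif_pos j.isLt, dif_pos j.isLt]
    rw [EuclideanSpace.norm_eq, Real.sq_sqrt (by positivity)]
    refine Finset.sum_congr rfl fun j _ => ?_
    rw [hcoord j]
    simp [Real.norm_eq_abs, sq_abs]
  have hg0 : ∀ i, (0:ℝ) ≤ (L i : ℝ) ^ d := fun i => by positivity
  constructor
  · intro x
    have hsum : Summable fun m => (h x m) ^ 2 := by
      have hdiv : Summable fun k : ℕ => (L (k / d) : ℝ) ^ d := by
        refine summable_of_sum_range_le (c := (d:ℝ) * S) (fun k => hg0 _) fun M => ?_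
        simpa using st9_fiber_sum d (fun i => (L i : ℝ) ^ d) hg0 hS (· / d) (d * ·)
          (st9_div_bounds d hd) (Finset.range M)
      have htail : Summable fun k : ℕ => (h x (k + d)) ^ 2 := by
        refine Summable.of_nonneg_of_le (fun k => sq_nonneg _)
          (fun k => ?_) (hdiv.mul_right (‖x‖ ^ 2))
        have hk := key x 0 (k + d) (by omega)
        rw [h0 (k + d) (by omega), sub_zero, sub_zero] at hk
        simpa using hk
      exact (summable_nat_add_iff d).mp htail
    refine memℓp_gen ?_
    refine hsum.congr fun m => ?_
    rw [show ((2 : ENNReal).toReal) = ((2 : ℕ) : ℝ) by norm_num, Real.rpow_natCast,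
      Real.norm_eq_abs, sq_abs]
  · intro n hn x hx y hy
    have hsq : (0:ℝ) ≤ 1 + (d : ℝ) * S := by positivity
    have hone : (1:ℝ) ≤ Real.sqrt (1 + (d : ℝ) * S) := by
      rw [Real.one_le_sqrt]
      have : (0:ℝ) ≤ (d:ℝ) * S := by positivity
      linarith
    have hsplit : ∑ m ∈ Finset.range d, (h x m - h y m) ^ 2 +
        ∑ m ∈ Finset.Ico d n, (h x m - h y m) ^ 2 =
        ∑ m ∈ Finset.range n, (h x m - h y m) ^ 2 :=
      Finset.sum_range_add_sum_Ico _ hn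
    have htail : ∑ m ∈ Finset.Ico d n, (h x m - h y m) ^ 2 ≤
        (d : ℝ) * S * ‖x - y‖ ^ 2 := by
      calc ∑ m ∈ Finset.Ico d n, (h x m - h y m) ^ 2
          ≤ ∑ m ∈ Finset.Ico d n, (L ((m - d) / d) : ℝ) ^ d * ‖x - y‖ ^ 2 :=
            Finset.sum_le_sum fun m hm =>
              key x y m (Finset.mem_Ico.mp hm).1
        _ = (∑ m ∈ Finset.Ico d n, (L ((m - d) / d) : ℝ) ^ d) * ‖x - y‖ ^ 2 := by
            rw [Finset.sum_mul]
        _ ≤ ((d : ℝ) * S) * ‖x - y‖ ^ 2 := by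
            refine mul_le_mul_of_nonneg_right ?_ (by positivity)
            rw [Finset.sum_Ico_eq_sum_range]
            have : ∀ k, (d + k - d) / d = k / d := fun k => by
              rw [Nat.add_sub_cancel_left]
            simp_rw [this]
            exact st9_fiber_sum d (fun i => (L i : ℝ) ^ d) hg0 hS (· / d) (d * ·)
              (st9_div_bounds d hd) _
    have hlow : ‖x - y‖ ^ 2 ≤ ∑ m ∈ Finset.range n, (h x m - h y m) ^ 2 := by
      rw [← base x y, ← hsplit]
      have : (0:ℝ) ≤ ∑ m ∈ Finset.Ico d n, (h x m - h y m) ^ 2 :=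
        Finset.sum_nonneg fun m _ => sq_nonneg _
      linarith
    have hup : ∑ m ∈ Finset.range n, (h x m - h y m) ^ 2 ≤
        (1 + (d : ℝ) * S) * ‖x - y‖ ^ 2 := by
      rw [← hsplit, base x y]
      nlinarith [htail]
    constructor
    · calc (1 / Real.sqrt (1 + (d : ℝ) * S)) * ‖x - y‖
          ≤ 1 * ‖x - y‖ := by
            refine mul_le_mul_of_nonneg_right ?_ (norm_nonneg _)
            rw [div_le_one (by linarith)]
            exact hone
        _ = Real.sqrt (‖x - y‖ ^ 2) := by
            rw [one_mul, Real.sqrt_sq (norm_nonneg _)]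
        _ ≤ Real.sqrt (∑ m ∈ Finset.range n, (h x m - h y m) ^ 2) :=
            Real.sqrt_le_sqrt hlow
    · calc Real.sqrt (∑ m ∈ Finset.range n, (h x m - h y m) ^ 2)
          ≤ Real.sqrt ((1 + (d : ℝ) * S) * ‖x - y‖ ^ 2) := Real.sqrt_le_sqrt hup
        _ = Real.sqrt (1 + (d : ℝ) * S) * ‖x - y‖ := by
            rw [Real.sqrt_mul hsq, Real.sqrt_sq (norm_nonneg _)]
end

section
/- Every metric 1-current T on ℝ with compact support has finite mass: there exists a constant C_T < ∞ such that for every smooth ω : ℝ → ℝ, |T(1, W)| ≤ C_T ‖ω‖_∞, where W(t) = ∫₀^t ω(s) ds. Consequently, the classical current C₁(T), given by C₁T(ω dt) = T(1, W), is representable by integration against a finite measure. -/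
open scoped NNReal

/-- A metric `1`-current on `ℝ` in the sense of Ambrosio–Kirchheim/Lang: a
bilinear functional `T(f, π)` on pairs of a bounded Lipschitz function `f` and a
Lipschitz function `π`, satisfying locality and joint continuity (continuity
under pointwise convergence with uniformly bounded Lipschitz constants and
uniformly compact supports of the first arguments). -/
structure MetricCurrent1 where
  toFun : (ℝ → ℝ) → (ℝ → ℝ) → ℝ
  add_left : ∀ f g π : ℝ → ℝ,
    (∃ K : ℝ≥0, LipschitzWith K f) → (∃ C : ℝ, ∀ x, |f x| ≤ C) →
    (∃ K : ℝ≥0, LipschitzWith K g) → (∃ C : ℝ, ∀ x, |g x| ≤ C) →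
    (∃ K : ℝ≥0, LipschitzWith K π) →
    toFun (f + g) π = toFun f π + toFun g π
  smul_left : ∀ (c : ℝ) (f π : ℝ → ℝ),
    (∃ K : ℝ≥0, LipschitzWith K f) → (∃ C : ℝ, ∀ x, |f x| ≤ C) →
    (∃ K : ℝ≥0, LipschitzWith K π) →
    toFun (c • f) π = c * toFun f π
  add_right : ∀ f π κ : ℝ → ℝ,
    (∃ K : ℝ≥0, LipschitzWith K f) → (∃ C : ℝ, ∀ x, |f x| ≤ C) →
    (∃ K : ℝ≥0, LipschitzWith K π) → (∃ K : ℝ≥0, LipschitzWith K κ) →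
    toFun f (π + κ) = toFun f π + toFun f κ
  smul_right : ∀ (c : ℝ) (f π : ℝ → ℝ),
    (∃ K : ℝ≥0, LipschitzWith K f) → (∃ C : ℝ, ∀ x, |f x| ≤ C) →
    (∃ K : ℝ≥0, LipschitzWith K π) →
    toFun f (c • π) = c * toFun f π
  locality : ∀ f π : ℝ → ℝ,
    (∃ K : ℝ≥0, LipschitzWith K f) → (∃ C : ℝ, ∀ x, |f x| ≤ C) →
    (∃ K : ℝ≥0, LipschitzWith K π) →
    (∃ U : Set ℝ, IsOpen U ∧ tsupport f ⊆ U ∧ ∃ c₀ : ℝ, ∀ x ∈ U, π x = c₀) →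
    toFun f π = 0
  continuity : ∀ (f : ℕ → ℝ → ℝ) (g : ℝ → ℝ) (π : ℕ → ℝ → ℝ) (κ : ℝ → ℝ)
    (L : ℝ≥0),
    (∀ n, LipschitzWith L (f n)) → LipschitzWith L g →
    (∀ n, LipschitzWith L (π n)) → LipschitzWith L κ →
    (∃ Kc : Set ℝ, IsCompact Kc ∧ (∀ n, tsupport (f n) ⊆ Kc) ∧ tsupport g ⊆ Kc) →
    (∀ x, Filter.Tendsto (fun n => f n x) Filter.atTop (nhds (g x))) →
    (∀ x, Filter.Tendsto (fun n => π n x) Filter.atTop (nhds (κ x))) →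
    Filter.Tendsto (fun n => toFun (f n) (π n)) Filter.atTop (nhds (toFun g κ))

open MeasureTheory Set Filter

namespace S17

/-- difference of clamps is monotone in `t` -/
lemma mm_mono {a b s t : ℝ} (hab : a ≤ b) (hst : s ≤ t) :
    min s b - min s a ≤ min t b - min t a := by
  rcases le_total s a with h1 | h1 <;> rcases le_total t a with h2 | h2 <;>
    rcases le_total s b with h3 | h3 <;> rcases le_total t b with h4 | h4 <;>
    simp [min_def] <;> split_ifs <;> linarith

/-- difference of clamps grows at most like `t - s` -/
lemma mm_lip {a b s t : ℝ} (hab : a ≤ b) (hst : s ≤ t) :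
    (min t b - min t a) - (min s b - min s a) ≤ t - s := by
  rcases le_total s a with h1 | h1 <;> rcases le_total t a with h2 | h2 <;>
    rcases le_total s b with h3 | h3 <;> rcases le_total t b with h4 | h4 <;>
    simp [min_def] <;> split_ifs <;> linarith

lemma lip_of_dist {K : ℝ} (hK : 0 ≤ K) {f : ℝ → ℝ}
    (h : ∀ s t : ℝ, s ≤ t → |f t - f s| ≤ K * (t - s)) :
    LipschitzWith K.toNNReal f := by
  rw [lipschitzWith_iff_dist_le_mul]
  intro x y
  rw [Real.dist_eq, Real.dist_eq, Real.coe_toNNReal K hK]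
  rcases le_total x y with hxy | hxy
  · calc |f x - f y| = |f y - f x| := abs_sub_comm _ _
      _ ≤ K * (y - x) := h x y hxy
      _ = K * |x - y| := by rw [abs_sub_comm, abs_of_nonneg (by linarith)]
  · calc |f x - f y| ≤ K * (x - y) := h y x hxy
      _ = K * |x - y| := by rw [abs_of_nonneg (by linarith)]

/-- Lipschitz bound for combinations `∑ cᵢ (min t xᵢ₊₁ - min t xᵢ)`. -/
lemma lip_comb (n : ℕ) (x : ℕ → ℝ) (hx : Monotone x) (c : ℕ → ℝ) (K : ℝ) (hK : 0 ≤ K)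
    (hc : ∀ i, |c i| ≤ K) :
    LipschitzWith K.toNNReal
      (fun t => ∑ i ∈ Finset.range n, c i * (min t (x (i+1)) - min t (x i))) := by
  apply lip_of_dist hK
  intro s t hst
  have key : ∀ i : ℕ, |c i * (min t (x (i+1)) - min t (x i)) - c i * (min s (x (i+1)) - min s (x i))|
      ≤ K * ((min t (x (i+1)) - min t (x i)) - (min s (x (i+1)) - min s (x i))) := by
    intro i
    rw [← mul_sub, abs_mul]
    have h1 : 0 ≤ (min t (x (i+1)) - min t (x i)) - (min s (x (i+1)) - min s (x i)) := by
      have := mm_mono (hx (Nat.le_succ i)) hst; linarith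
    rw [abs_of_nonneg h1]
    exact mul_le_mul_of_nonneg_right (hc i) h1
  calc |(∑ i ∈ Finset.range n, c i * (min t (x (i+1)) - min t (x i))) -
        ∑ i ∈ Finset.range n, c i * (min s (x (i+1)) - min s (x i))|
      = |∑ i ∈ Finset.range n, (c i * (min t (x (i+1)) - min t (x i)) -
          c i * (min s (x (i+1)) - min s (x i)))| := by rw [Finset.sum_sub_distrib]
    _ ≤ ∑ i ∈ Finset.range n, |c i * (min t (x (i+1)) - min t (x i)) -
          c i * (min s (x (i+1)) - min s (x i))| := Finset.abs_sum_le_sum_abs _ _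
    _ ≤ ∑ i ∈ Finset.range n, K * ((min t (x (i+1)) - min t (x i)) -
          (min s (x (i+1)) - min s (x i))) := Finset.sum_le_sum fun i _ => key i
    _ = K * (((min t (x n) - min s (x n))) - ((min t (x 0) - min s (x 0)))) := by
        rw [← Finset.mul_sum]
        congr 1
        have : ∀ i, (min t (x (i+1)) - min t (x i)) - (min s (x (i+1)) - min s (x i)) =
            (fun j => min t (x j) - min s (x j)) (i+1) - (fun j => min t (x j) - min s (x j)) i := by
          intro i; ring
        rw [Finset.sum_congr rfl fun i _ => this i]
        exact Finset.sum_range_sub (fun j => min t (x j) - min s (x j)) n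
    _ ≤ K * (t - s) := by
        apply mul_le_mul_of_nonneg_left _ hK
        have h := mm_lip (hx (Nat.zero_le n)) hst
        linarith

/-- volume computation for clamps -/
lemma vol_mm {a b : ℝ} (hab : a ≤ b) (t : ℝ) :
    (volume (Ioc a b ∩ Iic t)).toReal = min t b - min t a := by
  rw [Ioc_inter_Iic, Real.volume_Ioc]
  rcases le_total t a with h | h
  · have h1 : min b t - a ≤ 0 := by simp [min_def]; split_ifs <;> linarith
    rw [ENNReal.ofReal_eq_zero.2 h1, ENNReal.toReal_zero]
    simp [min_eq_left (le_trans h hab), min_eq_left h]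
  · have h1 : 0 ≤ min b t - a := by simp [min_def]; split_ifs <;> linarith
    rw [ENNReal.toReal_ofReal h1]
    rw [min_comm b t, min_eq_right h]

end S17

namespace S17b
open S17

noncomputable def cutoff (M : ℝ) : ℝ → ℝ := fun t => min 1 (max 0 (M + 1 - |t|))

lemma cutoff_lip (M : ℝ) : LipschitzWith 1 (cutoff M) := by
  have : ((1:ℝ).toNNReal) = 1 := by simp
  rw [← this]
  apply lip_of_dist zero_le_one
  intro s t hst
  unfold cutoff
  calc |min 1 (max 0 (M + 1 - |t|)) - min 1 (max 0 (M + 1 - |s|))|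
      ≤ max |1 - 1| |max 0 (M + 1 - |t|) - max 0 (M + 1 - |s|)| := abs_min_sub_min_le_max _ _ _ _
    _ ≤ |max 0 (M + 1 - |t|) - max 0 (M + 1 - |s|)| := by simp
    _ ≤ max |0 - 0| |(M + 1 - |t|) - (M + 1 - |s|)| := abs_max_sub_max_le_max _ _ _ _
    _ ≤ |(M + 1 - |t|) - (M + 1 - |s|)| := by simp
    _ = |(|s|) - (|t|)| := by congr 1; ring
    _ ≤ |s - t| := abs_abs_sub_abs_le_abs_sub s t
    _ = |t - s| := abs_sub_comm _ _
    _ = 1 * (t - s) := by rw [one_mul, abs_of_nonneg (by linarith)]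

lemma cutoff_nonneg (M t : ℝ) : 0 ≤ cutoff M t := le_min (by norm_num) (le_max_left _ _)

lemma cutoff_le_one (M t : ℝ) : cutoff M t ≤ 1 := min_le_left _ _

lemma cutoff_bdd (M : ℝ) : ∀ t, |cutoff M t| ≤ 1 := fun t =>
  abs_le.2 ⟨by linarith [cutoff_nonneg M t], cutoff_le_one M t⟩

lemma cutoff_eq_one {M t : ℝ} (h : |t| ≤ M) : cutoff M t = 1 := by
  unfold cutoff
  rw [max_eq_right (by linarith), min_eq_left (by linarith)]

lemma cutoff_tsupport {M : ℝ} (hM : 0 ≤ M) : tsupport (cutoff M) ⊆ Icc (-(M+1)) (M+1) := by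
  apply closure_minimal _ isClosed_Icc
  intro t ht
  simp only [Function.mem_support, ne_eq] at ht
  by_contra hc
  apply ht
  have h1 : M + 1 - |t| ≤ 0 := by
    simp only [mem_Icc, not_and_or, not_le] at hc
    rcases hc with h | h
    · linarith [neg_abs_le t]
    · linarith [le_abs_self t]
  unfold cutoff
  rw [max_eq_left h1, min_eq_right (by norm_num)]

end S17b

namespace S17c
open S17 S17b

variable (T : MetricCurrent1) {f : ℝ → ℝ}
  (hfl : ∃ K : ℝ≥0, LipschitzWith K f) (hfb : ∃ C : ℝ, ∀ x, |f x| ≤ C)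

include hfl hfb

lemma T_const (c : ℝ) : T.toFun f (fun _ => c) = 0 :=
  T.locality f (fun _ => c) hfl hfb ⟨0, LipschitzWith.const' c⟩
    ⟨univ, isOpen_univ, subset_univ _, c, fun _ _ => rfl⟩

lemma T_shift (π : ℝ → ℝ) (hπ : ∃ K : ℝ≥0, LipschitzWith K π) (c : ℝ) :
    T.toFun f (fun t => π t + c) = T.toFun f π := by
  have h := T.add_right f π (fun _ => c) hfl hfb hπ ⟨0, LipschitzWith.const' c⟩
  have e : (fun t => π t + c) = π + (fun _ => c) := rfl
  rw [e, h, T_const T hfl hfb c, add_zero]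

omit hfl hfb in
lemma lip_const_mul {K : ℝ≥0} {g : ℝ → ℝ} (c : ℝ) (h : LipschitzWith K g) :
    LipschitzWith ((Real.toNNReal |c|) * K) (fun t => c * g t) := by
  rw [lipschitzWith_iff_dist_le_mul] at h ⊢
  intro x y
  have : ((Real.toNNReal |c| * K : ℝ≥0) : ℝ) = |c| * (K : ℝ) := by
    rw [NNReal.coe_mul, Real.coe_toNNReal _ (abs_nonneg c)]
  rw [this, Real.dist_eq, ← mul_sub, abs_mul, mul_assoc]
  exact mul_le_mul_of_nonneg_left (by rw [← Real.dist_eq]; exact h x y) (abs_nonneg c)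

omit hfl hfb in
lemma lip_neg {K : ℝ≥0} {π : ℝ → ℝ} (h : LipschitzWith K π) :
    LipschitzWith K (fun t => -π t) := by
  intro x y
  simpa [edist_comm, edist_neg] using h x y

lemma T_sub (π κ : ℝ → ℝ) (hπ : ∃ K : ℝ≥0, LipschitzWith K π)
    (hκ : ∃ K : ℝ≥0, LipschitzWith K κ) :
    T.toFun f (fun t => π t - κ t) = T.toFun f π - T.toFun f κ := by
  obtain ⟨K, hK⟩ := hκ
  have hneg : ∃ K : ℝ≥0, LipschitzWith K (((-1 : ℝ) • κ)) := ⟨K, by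
    have := lip_neg hK
    convert this using 1
    funext t; simp⟩
  have e : (fun t => π t - κ t) = π + ((-1 : ℝ) • κ) := by
    funext t; simp [sub_eq_add_neg]
  rw [e, T.add_right f π ((-1 : ℝ) • κ) hfl hfb hπ hneg,
    T.smul_right (-1) f κ hfl hfb ⟨K, hK⟩]
  ring

lemma T_finsum (n : ℕ) (π : ℕ → ℝ → ℝ) (hπ : ∀ i, ∃ K : ℝ≥0, LipschitzWith K (π i)) :
    T.toFun f (fun t => ∑ i ∈ Finset.range n, π i t) =
      ∑ i ∈ Finset.range n, T.toFun f (π i) := by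
  induction n with
  | zero =>
      simp only [Finset.range_zero, Finset.sum_empty]
      exact T_const T hfl hfb 0
  | succ n ih =>
      have hsum : ∀ m : ℕ, ∃ K : ℝ≥0, LipschitzWith K (fun t => ∑ i ∈ Finset.range m, π i t) := by
        intro m
        induction m with
        | zero => exact ⟨0, by simpa using LipschitzWith.const' (0:ℝ)⟩
        | succ m ihm =>
            obtain ⟨K1, hK1⟩ := ihm
            obtain ⟨K2, hK2⟩ := hπ m
            refine ⟨K1 + K2, ?_⟩
            have := hK1.add hK2
            have e : (fun t => ∑ i ∈ Finset.range (m+1), π i t) =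
                fun x => ∑ i ∈ Finset.range m, π i x + π m x := by
              funext t; simp [Finset.sum_range_succ]
            rw [e]; exact this
      have e : (fun t => ∑ i ∈ Finset.range (n+1), π i t)
          = (fun t => ∑ i ∈ Finset.range n, π i t) + π n := by
        funext t; simp [Finset.sum_range_succ]
      rw [e, T.add_right f _ _ hfl hfb (hsum n) (hπ n), ih, Finset.sum_range_succ]

omit hfl hfb in
lemma lip_min_const (x : ℝ) : LipschitzWith 1 (fun t => min t x) := by
  have h := LipschitzWith.id.min (show LipschitzWith 0 (fun _ : ℝ => x) from LipschitzWith.const' x)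
  exact h.weaken (by simp)

/-- the workhorse: value of `T` on partition combinations. -/
lemma T_comb (n : ℕ) (x : ℕ → ℝ) (c : ℕ → ℝ) :
    T.toFun f (fun t => ∑ i ∈ Finset.range n, c i * (min t (x (i+1)) - min t (x i))) =
      ∑ i ∈ Finset.range n, c i * (T.toFun f (fun t => min t (x (i+1))) -
        T.toFun f (fun t => min t (x i))) := by
  have hmm : ∀ a b : ℝ, ∃ K : ℝ≥0, LipschitzWith K (fun t => min t b - min t a) := by
    intro a b
    exact ⟨2, by
      have := (lip_min_const b).sub (lip_min_const a)
      exact this.weaken (by norm_num)⟩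
  have step : ∀ i, T.toFun f (fun t => c i * (min t (x (i+1)) - min t (x i)))
      = c i * (T.toFun f (fun t => min t (x (i+1))) - T.toFun f (fun t => min t (x i))) := by
    intro i
    have e : (fun t => c i * (min t (x (i+1)) - min t (x i)))
        = (c i) • (fun t => min t (x (i+1)) - min t (x i)) := rfl
    rw [e, T.smul_right (c i) f _ hfl hfb (hmm (x i) (x (i+1))),
      T_sub T hfl hfb _ _ ⟨1, lip_min_const (x (i+1))⟩ ⟨1, lip_min_const (x i)⟩]
  rw [T_finsum T hfl hfb n _ (fun i => by
    obtain ⟨K, hK⟩ := hmm (x i) (x (i+1))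
    exact ⟨Real.toNNReal |c i| * K, lip_const_mul (c i) hK⟩)]
  exact Finset.sum_congr rfl fun i _ => step i

end S17c

namespace S17d
open S17 S17b S17c

lemma chi_lip_ex (M : ℝ) : ∃ K : ℝ≥0, LipschitzWith K (cutoff M) := ⟨1, cutoff_lip M⟩
lemma chi_bdd_ex (M : ℝ) : ∃ C : ℝ, ∀ x, |cutoff M x| ≤ C := ⟨1, cutoff_bdd M⟩

/-- Uniform boundedness: `|T(χ, π)| ≤ C ⬝ Lip(π)`. -/
lemma T_bound (T : MetricCurrent1) {M : ℝ} (hM : 0 ≤ M) :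
    ∃ C : ℝ, 0 ≤ C ∧ ∀ (π : ℝ → ℝ) (K : ℝ≥0), LipschitzWith K π →
      |T.toFun (cutoff M) π| ≤ C * K := by
  have key : ∃ C : ℝ, ∀ π : ℝ → ℝ, LipschitzWith 1 π → |T.toFun (cutoff M) π| ≤ C := by
    by_contra hcon
    push_neg at hcon
    choose π hπlip hπgt using fun n : ℕ => hcon (((n : ℝ) + 1)^2)
    set κ : ℕ → ℝ → ℝ := fun n t => (π n t - π n 0) / ((n : ℝ) + 1) with hκ
    have hn1 : ∀ n : ℕ, (0:ℝ) < (n : ℝ) + 1 := fun n => by positivity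
    have hκlip : ∀ n, LipschitzWith 1 (κ n) := by
      intro n
      have : ((1:ℝ)).toNNReal = 1 := by simp
      rw [← this]
      apply lip_of_dist zero_le_one
      intro s t hst
      have h1 : |π n t - π n s| ≤ 1 * (t - s) := by
        have := (hπlip n).dist_le_mul s t
        rw [Real.dist_eq, Real.dist_eq, abs_sub_comm] at this
        calc |π n t - π n s| ≤ 1 * |s - t| := this
          _ = 1 * (t - s) := by rw [abs_sub_comm, abs_of_nonneg (by linarith)]
      have e : κ n t - κ n s = (π n t - π n s) / ((n:ℝ)+1) := by
        rw [hκ]; ring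
      rw [e, abs_div, abs_of_pos (hn1 n), div_le_iff₀ (hn1 n)]
      nlinarith [abs_nonneg (π n t - π n s), hn1 n]
    have hκval : ∀ n, |T.toFun (cutoff M) (κ n)| > (n : ℝ) + 1 := by
      intro n
      have e : κ n = (((n:ℝ)+1)⁻¹) • (fun t => π n t + (-(π n 0))) := by
        funext t; simp [hκ, div_eq_inv_mul, sub_eq_add_neg]
      have hlipshift : ∃ K : ℝ≥0, LipschitzWith K (fun t => π n t + (-(π n 0))) := by
        refine ⟨1, ?_⟩
        intro x y
        simpa [edist_add_right] using hπlip n x y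
      rw [e, T.smul_right _ _ _ (chi_lip_ex M) (chi_bdd_ex M) hlipshift,
        T_shift T (chi_lip_ex M) (chi_bdd_ex M) (π n) ⟨1, hπlip n⟩ (-(π n 0))]
      rw [abs_mul, abs_of_pos (inv_pos.2 (hn1 n))]
      rw [gt_iff_lt, ← div_eq_inv_mul, lt_div_iff₀ (hn1 n)]
      calc ((n:ℝ)+1) * ((n:ℝ)+1) = ((n:ℝ)+1)^2 := by ring
        _ < |T.toFun (cutoff M) (π n)| := hπgt n
    have htend : Tendsto (fun n => T.toFun (cutoff M) (κ n)) atTop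
        (nhds (T.toFun (cutoff M) (fun _ => (0:ℝ)))) := by
      apply T.continuity (fun _ => cutoff M) (cutoff M) κ (fun _ => (0:ℝ)) 1
      · exact fun _ => cutoff_lip M
      · exact cutoff_lip M
      · exact hκlip
      · exact (LipschitzWith.const' (0:ℝ)).weaken (zero_le_one)
      · exact ⟨Icc (-(M+1)) (M+1), isCompact_Icc, fun _ => cutoff_tsupport hM, cutoff_tsupport hM⟩
      · exact fun x => tendsto_const_nhds
      · intro x
        show Tendsto (fun n => κ n x) atTop (nhds 0)
        refine squeeze_zero_norm (E := ℝ) (f := fun n => κ n x) (a := fun n => |x| * (1/((n:ℝ)+1))) (fun n => ?_) ?_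
        · have := (hπlip n).dist_le_mul x 0
          rw [Real.dist_eq, Real.dist_eq] at this
          have hb : |π n x - π n 0| ≤ |x| := by simpa using this
          rw [hκ]
          simp only [Real.norm_eq_abs, abs_div, abs_of_pos (hn1 n)]
          rw [div_eq_mul_one_div]
          exact mul_le_mul_of_nonneg_right hb (by positivity)
        · simpa using (tendsto_const_nhds (x := |x|)).mul tendsto_one_div_add_atTop_nhds_zero_nat
    rw [T_const T (chi_lip_ex M) (chi_bdd_ex M) 0] at htend
    have hev := htend.eventually (eventually_abs_sub_lt 0 one_pos)
    rw [eventually_atTop] at hev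
    obtain ⟨N, hN⟩ := hev
    have := hN N le_rfl
    have := hκval N
    simp only [sub_zero] at *
    have : (N:ℝ) + 1 < 1 := by
      calc (N:ℝ) + 1 < |T.toFun (cutoff M) (κ N)| := hκval N
        _ < 1 := by simpa using hN N le_rfl
    have : (0:ℝ) ≤ N := Nat.cast_nonneg N
    linarith
  obtain ⟨C, hC⟩ := key
  refine ⟨max C 0, le_max_right _ _, ?_⟩
  intro π K hK
  rcases eq_or_lt_of_le (zero_le : (0:ℝ≥0) ≤ K) with h0 | h0
  · have hconst : π = fun _ => π 0 := by
      funext x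
      have := hK x 0
      rw [← h0] at this
      simp only [ENNReal.coe_zero, zero_mul, nonpos_iff_eq_zero] at this
      exact edist_eq_zero.1 this
    rw [hconst, T_const T (chi_lip_ex M) (chi_bdd_ex M) (π 0)]
    simp only [abs_zero]
    positivity
  · have hKpos : (0:ℝ) < (K:ℝ) := h0
    set ρ : ℝ → ℝ := fun t => ((K:ℝ))⁻¹ * π t with hρ
    have hρlip : LipschitzWith 1 ρ := by
      have h := lip_const_mul (g := π) ((K:ℝ))⁻¹ hK
      have e : Real.toNNReal |((K:ℝ))⁻¹| * K = 1 := by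
        rw [abs_of_pos (inv_pos.2 hKpos)]
        ext
        rw [NNReal.coe_mul, Real.coe_toNNReal _ (le_of_lt (inv_pos.2 hKpos))]
        simp [inv_mul_cancel₀ (ne_of_gt hKpos)]
      rwa [e] at h
    have e : π = (K:ℝ) • ρ := by
      funext t
      simp [hρ, ← mul_assoc, mul_inv_cancel₀ (ne_of_gt hKpos)]
    rw [e, T.smul_right _ _ _ (chi_lip_ex M) (chi_bdd_ex M) ⟨1, hρlip⟩, abs_mul,
      abs_of_pos hKpos]
    calc (K:ℝ) * |T.toFun (cutoff M) ρ| ≤ (K:ℝ) * C :=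
          mul_le_mul_of_nonneg_left (hC ρ hρlip) (le_of_lt hKpos)
      _ ≤ max C 0 * K := by
          rw [mul_comm]
          exact mul_le_mul_of_nonneg_right (le_max_left _ _) (le_of_lt hKpos)

end S17d

namespace S17e
open S17 S17b S17c S17d

noncomputable def gfun (T : MetricCurrent1) (M : ℝ) : ℝ → ℝ :=
  fun x => T.toFun (cutoff M) (fun t => min t x)

lemma g_diff (T : MetricCurrent1) (M : ℝ) (a b : ℝ) :
    T.toFun (cutoff M) (fun t => min t b - min t a) = gfun T M b - gfun T M a :=
  T_sub T (chi_lip_ex M) (chi_bdd_ex M) _ _ ⟨1, lip_min_const b⟩ ⟨1, lip_min_const a⟩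

lemma g_cont (T : MetricCurrent1) {M : ℝ} (hM : 0 ≤ M) : Continuous (gfun T M) := by
  apply SeqContinuous.continuous
  intro x a hx
  have := T.continuity (fun _ => cutoff M) (cutoff M)
    (fun n => fun t => min t (x n)) (fun t => min t a) 1
    (fun _ => cutoff_lip M) (cutoff_lip M) (fun n => lip_min_const (x n)) (lip_min_const a)
    ⟨Icc (-(M+1)) (M+1), isCompact_Icc, fun _ => cutoff_tsupport hM, cutoff_tsupport hM⟩
    (fun _ => tendsto_const_nhds)
    (fun t => ((continuous_const.min continuous_id).continuousAt (x := a)).tendsto.comp hx)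
  exact this

lemma g_bv (T : MetricCurrent1) {M C : ℝ} (hM : 0 ≤ M)
    (hC : ∀ (π : ℝ → ℝ) (K : ℝ≥0), LipschitzWith K π → |T.toFun (cutoff M) π| ≤ C * K)
    (n : ℕ) (x : ℕ → ℝ) (hx : Monotone x) :
    ∑ i ∈ Finset.range n, |gfun T M (x (i+1)) - gfun T M (x i)| ≤ C := by
  set c : ℕ → ℝ := fun i => if gfun T M (x i) ≤ gfun T M (x (i+1)) then 1 else -1 with hc
  have hcabs : ∀ i, |c i| ≤ 1 := by
    intro i; rw [hc]; dsimp only; split_ifs <;> simp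
  have hlip := lip_comb n x hx c 1 zero_le_one hcabs
  have h1 : (1:ℝ).toNNReal = 1 := by simp
  rw [h1] at hlip
  have hval := T_comb T (chi_lip_ex M) (chi_bdd_ex M) n x c
  have habs : ∀ i, c i * (gfun T M (x (i+1)) - gfun T M (x i))
      = |gfun T M (x (i+1)) - gfun T M (x i)| := by
    intro i
    rw [hc]; dsimp only; split_ifs with h
    · rw [one_mul, abs_of_nonneg (by linarith)]
    · rw [abs_of_neg (by push_neg at h; linarith)]; ring
  calc ∑ i ∈ Finset.range n, |gfun T M (x (i+1)) - gfun T M (x i)|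
      = ∑ i ∈ Finset.range n, c i * (gfun T M (x (i+1)) - gfun T M (x i)) :=
        (Finset.sum_congr rfl fun i _ => (habs i).symm)
    _ = T.toFun (cutoff M) (fun t => ∑ i ∈ Finset.range n, c i * (min t (x (i+1)) - min t (x i))) := by
        rw [hval]
        rfl
    _ ≤ |T.toFun (cutoff M) (fun t => ∑ i ∈ Finset.range n, c i * (min t (x (i+1)) - min t (x i)))| :=
        le_abs_self _
    _ ≤ C * (1:ℝ≥0) := hC _ 1 hlip
    _ = C := by simp

lemma g_evar (T : MetricCurrent1) {M C : ℝ} (hM : 0 ≤ M)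
    (hC : ∀ (π : ℝ → ℝ) (K : ℝ≥0), LipschitzWith K π → |T.toFun (cutoff M) π| ≤ C * K) :
    eVariationOn (gfun T M) univ ≤ ENNReal.ofReal C := by
  apply iSup_le
  rintro ⟨n, ⟨u, hu, -⟩⟩
  have : ∑ i ∈ Finset.range n, edist (gfun T M (u (i+1))) (gfun T M (u i))
      = ENNReal.ofReal (∑ i ∈ Finset.range n, |gfun T M (u (i+1)) - gfun T M (u i)|) := by
    rw [ENNReal.ofReal_sum_of_nonneg (fun i _ => abs_nonneg _)]
    exact Finset.sum_congr rfl fun i _ => by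
      rw [edist_dist, Real.dist_eq]
  rw [this]
  exact ENNReal.ofReal_le_ofReal (g_bv T hM hC n u hu)

end S17e

namespace S17f
open S17 S17b S17c S17d S17e

lemma exists_stieltjes (T : MetricCurrent1) {M C : ℝ} (hM : 0 ≤ M) (hCpos : 0 ≤ C)
    (hC : ∀ (π : ℝ → ℝ) (K : ℝ≥0), LipschitzWith K π → |T.toFun (cutoff M) π| ≤ C * K) :
    ∃ P Q : StieltjesFunction ℝ, IsFiniteMeasure P.measure ∧ IsFiniteMeasure Q.measure ∧
      ∀ x, P x - Q x = gfun T M x := by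
  set g := gfun T M with hg
  have hgb : ∀ x, |g x| ≤ C := by
    intro x
    have := hC (fun t => min t x) 1 (lip_min_const x)
    simpa [hg, gfun] using this
  have hEvar := g_evar T hM hC
  have hbv : BoundedVariationOn g univ :=
    ne_top_of_le_ne_top ENNReal.ofReal_ne_top hEvar
  have hlbv : LocallyBoundedVariationOn g univ := hbv.locallyBoundedVariationOn
  set p := variationOnFromTo g univ 0 with hpdef
  have hp : Monotone p :=
    monotoneOn_univ.1 (variationOnFromTo.monotoneOn hlbv (mem_univ 0))
  have htr : ∀ s : Set ℝ, (eVariationOn g s).toReal ≤ C := by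
    intro s
    calc (eVariationOn g s).toReal ≤ (ENNReal.ofReal C).toReal :=
          ENNReal.toReal_mono ENNReal.ofReal_ne_top
            (le_trans (eVariationOn.mono g (subset_univ s)) hEvar)
      _ = C := ENNReal.toReal_ofReal hCpos
  have hpb : ∀ x, |p x| ≤ C := by
    intro x
    rcases le_total 0 x with h | h
    · rw [hpdef, variationOnFromTo.eq_of_le g univ h, abs_of_nonneg ENNReal.toReal_nonneg]
      exact htr _
    · rw [hpdef, variationOnFromTo.eq_of_ge g univ h, abs_neg, abs_of_nonneg ENNReal.toReal_nonneg]
      exact htr _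
  set q : ℝ → ℝ := fun x => p x - g x with hqdef
  have hq : Monotone q :=
    monotoneOn_univ.1 (variationOnFromTo.sub_self_monotoneOn hlbv (mem_univ 0))
  have hqb : ∀ x, |q x| ≤ C + C := by
    intro x
    calc |q x| = |p x - g x| := rfl
      _ ≤ |p x| + |g x| := abs_sub _ _
      _ ≤ C + C := add_le_add (hpb x) (hgb x)
  set P := hp.stieltjesFunction with hPdef
  set Q := hq.stieltjesFunction with hQdef
  have hPb : ∀ x, |P x| ≤ C := by
    intro x
    have h1 : p x ≤ P x := by
      rw [hPdef, Monotone.stieltjesFunction_eq]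
      exact hp.le_rightLim le_rfl
    have h2 : P x ≤ p (x + 1) := by
      rw [hPdef, Monotone.stieltjesFunction_eq]
      exact hp.rightLim_le (lt_add_one x)
    rw [abs_le]
    exact ⟨le_trans (abs_le.1 (hpb x)).1 h1, le_trans h2 (abs_le.1 (hpb (x+1))).2⟩
  have hQb : ∀ x, |Q x| ≤ C + C := by
    intro x
    have h1 : q x ≤ Q x := by
      rw [hQdef, Monotone.stieltjesFunction_eq]
      exact hq.le_rightLim le_rfl
    have h2 : Q x ≤ q (x + 1) := by
      rw [hQdef, Monotone.stieltjesFunction_eq]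
      exact hq.rightLim_le (lt_add_one x)
    rw [abs_le]
    exact ⟨le_trans (abs_le.1 (hqb x)).1 h1, le_trans h2 (abs_le.1 (hqb (x+1))).2⟩
  have finmeas : ∀ (F : StieltjesFunction ℝ) (D : ℝ), (∀ x, |F x| ≤ D) →
      IsFiniteMeasure F.measure := by
    intro F D hFb
    have hba : BddAbove (range F) := ⟨D, by rintro y ⟨x, rfl⟩; exact (abs_le.1 (hFb x)).2⟩
    have hbb : BddBelow (range F) := ⟨-D, by rintro y ⟨x, rfl⟩; exact (abs_le.1 (hFb x)).1⟩
    exact F.isFiniteMeasure (tendsto_atBot_ciInf F.mono hbb) (tendsto_atTop_ciSup F.mono hba)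
  refine ⟨P, Q, finmeas P C hPb, finmeas Q (C + C) hQb, ?_⟩
  intro x
  have htp : Tendsto p (nhdsWithin x (Ioi x)) (nhds (P x)) := by
    rw [hPdef, Monotone.stieltjesFunction_eq]
    exact hp.tendsto_rightLim x
  have htq : Tendsto q (nhdsWithin x (Ioi x)) (nhds (Q x)) := by
    rw [hQdef, Monotone.stieltjesFunction_eq]
    exact hq.tendsto_rightLim x
  have htpq : Tendsto (fun y => p y - q y) (nhdsWithin x (Ioi x)) (nhds (P x - Q x)) :=
    htp.sub htq
  have hgt : Tendsto (fun y => p y - q y) (nhdsWithin x (Ioi x)) (nhds (g x)) := by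
    have e : (fun y => p y - q y) = g := by
      funext y; rw [hqdef]; ring
    rw [e]
    exact ((g_cont T hM).tendsto x).mono_left nhdsWithin_le_nhds
  exact tendsto_nhds_unique htpq hgt

end S17f

namespace S17g
open S17 S17b S17c S17d S17e

noncomputable def xp (R : ℝ) (n i : ℕ) : ℝ := -R + i * (2*R/(n+1))

noncomputable def Psi (ω : ℝ → ℝ) (R : ℝ) (n : ℕ) : ℝ → ℝ :=
  fun s => ∑ i ∈ Finset.range (n+1),
    indicator (Ioc (xp R n i) (xp R n (i+1))) (fun _ => ω (xp R n i)) s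

noncomputable def pin (ω : ℝ → ℝ) (R : ℝ) (n : ℕ) : ℝ → ℝ :=
  fun t => ∑ i ∈ Finset.range (n+1),
    ω (xp R n i) * (min t (xp R n (i+1)) - min t (xp R n i))

variable {ω : ℝ → ℝ} {R : ℝ}

lemma delta_pos (hR : 0 < R) (n : ℕ) : 0 < 2*R/(n+1) := by positivity

lemma xp_mono (hR : 0 < R) (n : ℕ) : Monotone (xp R n) := by
  intro i j hij
  unfold xp
  have : (i:ℝ) ≤ j := Nat.cast_le.2 hij
  nlinarith [delta_pos hR n]

lemma xp_zero (n : ℕ) : xp R n 0 = -R := by simp [xp]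

lemma xp_last (n : ℕ) : xp R n (n+1) = R := by
  unfold xp
  have h : ((n:ℝ)+1) ≠ 0 := by positivity
  field_simp
  push_cast
  ring

lemma xp_succ (n i : ℕ) : xp R n (i+1) = xp R n i + 2*R/(n+1) := by
  unfold xp; push_cast; ring

lemma loc (hR : 0 < R) (n : ℕ) {s : ℝ} (hs : s ∈ Ioc (-R) R) :
    ∃ i : ℕ, i ≤ n ∧ s ∈ Ioc (xp R n i) (xp R n (i+1)) ∧ Psi ω R n s = ω (xp R n i) := by
  set δ := 2*R/(n+1) with hδ
  have hδ0 : 0 < δ := delta_pos hR n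
  set u := (s + R)/δ with hu
  have hu0 : 0 < u := div_pos (by have := hs.1; linarith) hδ0
  have hu1 : u ≤ (n:ℝ) + 1 := by
    rw [hu, div_le_iff₀ hδ0, hδ]
    have h2 : s ≤ R := hs.2
    have : (2*R)/((n:ℝ)+1) * ((n:ℝ)+1) = 2*R := by field_simp
    nlinarith [delta_pos hR n]
  set z := ⌈u⌉ with hz
  have hz0 : 0 < z := Int.ceil_pos.2 hu0
  have hz1 : 1 ≤ z := hz0
  have hz2 : z ≤ (n:ℤ) + 1 := Int.ceil_le.2 (by push_cast; exact hu1)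
  set i := (z - 1).toNat with hi
  have hiz : ((i:ℤ)) = z - 1 := Int.toNat_of_nonneg (by omega)
  have hiR : ((i:ℝ)) = (z:ℝ) - 1 := by
    have := congrArg (fun m : ℤ => (m:ℝ)) hiz
    push_cast at this ⊢
    linarith
  have hile : i ≤ n := by omega
  have hmem : s ∈ Ioc (xp R n i) (xp R n (i+1)) := by
    constructor
    · unfold xp
      rw [← hδ]
      have h1 : (z:ℝ) < u + 1 := Int.ceil_lt_add_one u
      have h2 : (i:ℝ) * δ < s + R := by
        rw [hiR]
        calc ((z:ℝ) - 1) * δ < u * δ := by nlinarith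
          _ = s + R := by rw [hu]; field_simp
      linarith
    · unfold xp
      rw [← hδ]
      have h1 : u ≤ (z:ℝ) := Int.le_ceil u
      have h2 : s + R ≤ ((i:ℝ)+1) * δ := by
        rw [hiR]
        calc s + R = u * δ := by rw [hu]; field_simp
          _ ≤ (z:ℝ) * δ := by nlinarith
          _ = ((z:ℝ) - 1 + 1) * δ := by ring
      push_cast
      linarith
  refine ⟨i, hile, hmem, ?_⟩
  unfold Psi
  rw [Finset.sum_eq_single_of_mem i (Finset.mem_range.2 (Nat.lt_succ_of_le hile))]
  · exact indicator_of_mem hmem _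
  · intro j hj hne
    apply indicator_of_notMem
    rintro ⟨h1, h2⟩
    rcases lt_or_gt_of_ne hne with h | h
    · have hle2 : xp R n (j+1) ≤ xp R n i := xp_mono hR n (by omega)
      linarith [hmem.1]
    · have : xp R n (i+1) ≤ xp R n j := xp_mono hR n (by omega)
      linarith [hmem.2, h1, this]

lemma Psi_zero (hR : 0 < R) (n : ℕ) {s : ℝ} (hs : s ∉ Ioc (-R) R) : Psi ω R n s = 0 := by
  unfold Psi
  apply Finset.sum_eq_zero
  intro i hi
  apply indicator_of_notMem
  rintro ⟨h1, h2⟩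
  apply hs
  constructor
  · calc -R = xp R n 0 := (xp_zero n).symm
      _ ≤ xp R n i := xp_mono hR n (Nat.zero_le i)
      _ < s := h1
  · calc s ≤ xp R n (i+1) := h2
      _ ≤ xp R n (n+1) := xp_mono hR n (Finset.mem_range.1 hi)
      _ = R := xp_last n
lemma Psi_bound (hR : 0 < R) {c : ℝ} (hc : ∀ x, |ω x| ≤ c) (n : ℕ) (s : ℝ) :
    |Psi ω R n s| ≤ indicator (Ioc (-R) R) (fun _ => c) s := by
  by_cases hs : s ∈ Ioc (-R) R
  · obtain ⟨i, -, -, hval⟩ := loc hR n hs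
    rw [hval, indicator_of_mem hs]
    exact hc _
  · rw [Psi_zero hR n hs, indicator_of_notMem hs, abs_zero]

lemma Psi_tendsto (hR : 0 < R) (hcont : Continuous ω) (hsupp : tsupport ω ⊆ Ioo (-R) R)
    (s : ℝ) : Tendsto (fun n => Psi ω R n s) atTop (nhds (ω s)) := by
  by_cases hs : s ∈ Ioc (-R) R
  · choose i hile hmem hval using fun n => loc (ω := ω) hR n hs
    have hd : ∀ n, |xp R n (i n) - s| ≤ 2*R/(n+1) := by
      intro n
      have h1 := (hmem n).1
      have h2 := (hmem n).2
      rw [xp_succ] at h2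
      rw [abs_le]
      constructor <;> linarith
    have hxs : Tendsto (fun n => xp R n (i n)) atTop (nhds s) := by
      have hzero : Tendsto (fun n : ℕ => xp R n (i n) - s) atTop (nhds 0) := by
        apply squeeze_zero_norm hd
        have : Tendsto (fun n : ℕ => (2*R) * (1/((n:ℝ)+1))) atTop (nhds ((2*R) * 0)) :=
          tendsto_const_nhds.mul tendsto_one_div_add_atTop_nhds_zero_nat
        simpa [div_eq_mul_inv] using this
      have := hzero.add (tendsto_const_nhds (x := s))
      simpa using this
    have e : (fun n => Psi ω R n s) = fun n => ω (xp R n (i n)) := funext hval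
    rw [e]
    exact (hcont.continuousAt.tendsto).comp hxs
  · have e : ∀ n, Psi ω R n s = 0 := fun n => Psi_zero hR n hs
    have hω : ω s = 0 := by
      apply image_eq_zero_of_notMem_tsupport
      intro hmem
      exact hs (Ioo_subset_Ioc_self (hsupp hmem))
    simp only [e, hω]
    exact tendsto_const_nhds

lemma Psi_meas (n : ℕ) : Measurable (Psi ω R n) :=
  Finset.measurable_sum _ fun i _ => measurable_const.indicator measurableSet_Ioc

lemma int_Psi (hR : 0 < R) (F : StieltjesFunction ℝ) [IsFiniteMeasure F.measure] (n : ℕ) :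
    ∫ s, Psi ω R n s ∂F.measure =
      ∑ i ∈ Finset.range (n+1), ω (xp R n i) * (F (xp R n (i+1)) - F (xp R n i)) := by
  unfold Psi
  rw [integral_finset_sum _ (fun i _ => (integrable_indicator_iff measurableSet_Ioc).2
    ((integrableOn_const_iff (by finiteness)).2 (Or.inr (measure_lt_top _ _))))]
  apply Finset.sum_congr rfl
  intro i _
  rw [integral_indicator_const _ measurableSet_Ioc, measureReal_def, StieltjesFunction.measure_Ioc,
    ENNReal.toReal_ofReal (sub_nonneg.2 (F.mono (xp_mono hR n (Nat.le_succ i)))),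
    smul_eq_mul, mul_comm]

lemma int_pin (hR : 0 < R) (n : ℕ) (t : ℝ) :
    pin ω R n t = ∫ s, indicator (Iic t) (Psi ω R n) s := by
  have e : indicator (Iic t) (Psi ω R n) = fun s => ∑ i ∈ Finset.range (n+1),
      indicator (Iic t ∩ Ioc (xp R n i) (xp R n (i+1))) (fun _ => ω (xp R n i)) s := by
    funext s
    by_cases hs : s ∈ Iic t
    · rw [indicator_of_mem hs]
      unfold Psi
      apply Finset.sum_congr rfl
      intro i _
      by_cases h2 : s ∈ Ioc (xp R n i) (xp R n (i+1))
      · rw [indicator_of_mem h2, indicator_of_mem (mem_inter hs h2)]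
      · rw [indicator_of_notMem h2, indicator_of_notMem (fun hmem => h2 hmem.2)]
    · rw [indicator_of_notMem hs]
      symm
      apply Finset.sum_eq_zero
      intro i _
      exact indicator_of_notMem (fun hmem => hs hmem.1) _
  rw [e]
  have hint : ∀ i : ℕ, Integrable (fun s => indicator (Iic t ∩ Ioc (xp R n i) (xp R n (i+1)))
      (fun _ => ω (xp R n i)) s) volume := by
    intro i
    apply (integrable_indicator_iff ((measurableSet_Iic).inter measurableSet_Ioc)).2
    apply (integrableOn_const_iff (by finiteness)).2
    right
    calc volume (Iic t ∩ Ioc (xp R n i) (xp R n (i+1)))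
        ≤ volume (Ioc (xp R n i) (xp R n (i+1))) := measure_mono inter_subset_right
      _ < ⊤ := by rw [Real.volume_Ioc]; exact ENNReal.ofReal_lt_top
  rw [integral_finset_sum _ (fun i _ => hint i)]
  unfold pin
  apply Finset.sum_congr rfl
  intro i _
  rw [integral_indicator_const _ ((measurableSet_Iic).inter measurableSet_Ioc),
    measureReal_def, inter_comm, vol_mm (xp_mono hR n (Nat.le_succ i)), smul_eq_mul, mul_comm]

end S17g

namespace S17h
open S17 S17b S17c S17d S17e S17g
open intervalIntegral

variable {ω : ℝ → ℝ} {R c : ℝ}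

lemma W_diff (hcont : Continuous ω) (a t : ℝ) :
    (∫ s in (0:ℝ)..t, ω s) - (∫ s in (0:ℝ)..a, ω s) = ∫ s in a..t, ω s :=
  integral_interval_sub_left (hcont.intervalIntegrable _ _) (hcont.intervalIntegrable _ _)

lemma W_lip (hcont : Continuous ω) (hc : ∀ x, |ω x| ≤ c) (hc0 : 0 ≤ c) :
    LipschitzWith c.toNNReal (fun t => ∫ s in (0:ℝ)..t, ω s) := by
  apply lip_of_dist hc0
  intro s t hst
  rw [W_diff hcont]
  have h := norm_integral_le_of_norm_le_const (a := s) (b := t) (C := c) (f := ω)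
    (fun x _ => by rw [Real.norm_eq_abs]; exact hc x)
  rw [Real.norm_eq_abs, abs_of_nonneg (by linarith : (0:ℝ) ≤ t - s)] at h
  exact h

lemma Wshift_eq (hR : 0 < R) (hcont : Continuous ω) (hsupp : tsupport ω ⊆ Ioo (-R) R) (t : ℝ) :
    (∫ s in (0:ℝ)..t, ω s) - (∫ s in (0:ℝ)..(-R), ω s) = ∫ s, indicator (Iic t) ω s := by
  have hω0 : ∀ s : ℝ, s ≤ -R → ω s = 0 := by
    intro s hs
    apply image_eq_zero_of_notMem_tsupport
    intro hmem
    have := hsupp hmem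
    rw [mem_Ioo] at this
    linarith [this.1]
  rw [W_diff hcont]
  have e : indicator (Iic t) ω = indicator (Ioc (-R) t) ω := by
    funext s
    by_cases h1 : s ≤ -R
    · by_cases h2 : s ∈ Iic t
      · rw [indicator_of_mem h2, hω0 s h1,
          indicator_of_notMem (fun hm => by exact absurd hm.1 (not_lt.2 h1)), ]
      · rw [indicator_of_notMem h2,
          indicator_of_notMem (fun hm : s ∈ Ioc (-R) t => h2 hm.2)]
    · push_neg at h1
      by_cases h2 : s ≤ t
      · rw [indicator_of_mem (mem_Iic.2 h2), indicator_of_mem (show s ∈ Ioc (-R) t from ⟨h1, h2⟩)]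
      · rw [indicator_of_notMem (fun hm : s ∈ Iic t => h2 hm),
          indicator_of_notMem (fun hm : s ∈ Ioc (-R) t => h2 hm.2)]
  rw [e, MeasureTheory.integral_indicator measurableSet_Ioc]
  rcases le_total (-R) t with h | h
  · rw [integral_of_le h]
  · rw [integral_of_ge h]
    rw [Ioc_eq_empty (not_lt.2 h), Measure.restrict_empty, integral_zero_measure]
    rw [setIntegral_eq_zero_of_forall_eq_zero (fun x hx => hω0 x hx.2)]
    simp

end S17h


open S17 S17b S17c S17d S17e S17f S17g S17h

/-- Every metric `1`-current `T` on `ℝ` with compact support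
has finite mass: there is `C_T < ∞` with `|T(1, W)| ≤ C_T ‖ω‖_∞` for every
smooth `ω : ℝ → ℝ`, where `W t = ∫₀ᵗ ω`.  Consequently the classical current
`C₁T : ω ↦ T(1, W)` is representable by integration against a finite (signed)
measure. -/
theorem statement17 (T : MetricCurrent1)
    (hsupp : ∃ Kc : Set ℝ, IsCompact Kc ∧
      ∀ f π : ℝ → ℝ, (∃ K : ℝ≥0, LipschitzWith K f) → (∃ C : ℝ, ∀ x, |f x| ≤ C) →
        (∃ K : ℝ≥0, LipschitzWith K π) → (∀ x ∈ Kc, f x = 0) → T.toFun f π = 0) :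
    ∃ C : ℝ, 0 ≤ C ∧
      (∀ (ω : ℝ → ℝ) (c : ℝ), ContDiff ℝ (⊤ : ℕ∞) ω → (∀ x, |ω x| ≤ c) →
        |T.toFun (fun _ => 1) (fun t => ∫ s in (0 : ℝ)..t, ω s)| ≤ C * c) ∧
      ∃ μ ν : MeasureTheory.Measure ℝ,
        MeasureTheory.IsFiniteMeasure μ ∧ MeasureTheory.IsFiniteMeasure ν ∧
        ∀ ω : ℝ → ℝ, ContDiff ℝ (⊤ : ℕ∞) ω → HasCompactSupport ω →
          T.toFun (fun _ => 1) (fun t => ∫ s in (0 : ℝ)..t, ω s) =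
            (∫ x, ω x ∂μ) - ∫ x, ω x ∂ν := by
  classical
  obtain ⟨Kc, hKcpt, hloc⟩ := hsupp
  obtain ⟨r, hr⟩ := hKcpt.isBounded.subset_closedBall 0
  set M : ℝ := max r 0 with hMdef
  have hM : 0 ≤ M := le_max_right _ _
  have hKcM : ∀ x ∈ Kc, |x| ≤ M := by
    intro x hx
    have := hr hx
    rw [Metric.mem_closedBall, Real.dist_eq, sub_zero] at this
    exact le_trans this (le_max_left _ _)
  -- replacing 1 by the cutoff
  have hlip_one_sub : LipschitzWith 1 (fun t => 1 - cutoff M t) := by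
    intro x y
    simpa [edist_sub_left] using (cutoff_lip M) x y
  have hbdd_one_sub : ∀ x, |1 - cutoff M x| ≤ 1 := by
    intro x
    rw [abs_le]
    constructor
    · linarith [cutoff_le_one M x]
    · linarith [cutoff_nonneg M x]
  have T1χ : ∀ π : ℝ → ℝ, (∃ K : ℝ≥0, LipschitzWith K π) →
      T.toFun (fun _ => 1) π = T.toFun (cutoff M) π := by
    intro π hπ
    have hzero : T.toFun (fun t => 1 - cutoff M t) π = 0 :=
      hloc _ π ⟨1, hlip_one_sub⟩ ⟨1, hbdd_one_sub⟩ hπ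
        (fun x hx => by rw [cutoff_eq_one (hKcM x hx)]; ring)
    have e : (fun _ : ℝ => (1:ℝ)) = cutoff M + (fun t => 1 - cutoff M t) := by
      funext t
      show (1:ℝ) = cutoff M t + (1 - cutoff M t)
      ring
    rw [e, T.add_left (cutoff M) (fun t => 1 - cutoff M t) π (chi_lip_ex M) (chi_bdd_ex M)
      ⟨1, hlip_one_sub⟩ ⟨1, hbdd_one_sub⟩ hπ, hzero, add_zero]
  obtain ⟨C, hC0, hC⟩ := T_bound T hM
  refine ⟨C, hC0, ?_, ?_⟩
  · -- first bullet: finite mass bound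
    intro ω c hω hc
    have hc0 : 0 ≤ c := le_trans (abs_nonneg _) (hc 0)
    have hW := W_lip hω.continuous hc hc0
    rw [T1χ _ ⟨c.toNNReal, hW⟩]
    calc |T.toFun (cutoff M) (fun t => ∫ s in (0:ℝ)..t, ω s)| ≤ C * c.toNNReal :=
          hC _ _ hW
      _ = C * c := by rw [Real.coe_toNNReal _ hc0]
  · -- the representing measures
    obtain ⟨P, Q, hPfin, hQfin, hPQ⟩ := exists_stieltjes T hM hC0 hC
    refine ⟨P.measure, Q.measure, hPfin, hQfin, ?_⟩
    intro ω hω hωcs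
    set W : ℝ → ℝ := fun t => ∫ s in (0:ℝ)..t, ω s with hWdef
    obtain ⟨c₀, hc₀⟩ := hωcs.exists_bound_of_continuous hω.continuous
    set c : ℝ := max c₀ 0 with hcdef
    have hc : ∀ x, |ω x| ≤ c := fun x => le_trans (by rw [← Real.norm_eq_abs]; exact hc₀ x)
      (le_max_left _ _)
    have hc0 : 0 ≤ c := le_max_right _ _
    obtain ⟨r₂, hr₂⟩ := hωcs.isBounded.subset_closedBall 0
    set R : ℝ := max r₂ 0 + 1 with hRdef
    have hR : 0 < R := by positivity
    have hsup2 : tsupport ω ⊆ Ioo (-R) R := by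
      intro x hx
      have := hr₂ hx
      rw [Metric.mem_closedBall, Real.dist_eq, sub_zero] at this
      have h1 : |x| ≤ max r₂ 0 := le_trans this (le_max_left _ _)
      rw [abs_le] at h1
      constructor
      · rw [hRdef]; linarith [h1.1]
      · rw [hRdef]; linarith [h1.2]
    -- both representations of the Riemann sums
    have key1 : ∀ n, T.toFun (cutoff M) (pin ω R n) =
        (∫ s, Psi ω R n s ∂P.measure) - (∫ s, Psi ω R n s ∂Q.measure) := by
      intro n
      have h1 : T.toFun (cutoff M) (pin ω R n) = ∑ i ∈ Finset.range (n+1),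
          ω (xp R n i) * (gfun T M (xp R n (i+1)) - gfun T M (xp R n i)) := by
        unfold pin
        rw [T_comb T (chi_lip_ex M) (chi_bdd_ex M) (n+1) (xp R n) (fun i => ω (xp R n i))]
        rfl
      rw [h1, int_Psi hR P n, int_Psi hR Q n, ← Finset.sum_sub_distrib]
      apply Finset.sum_congr rfl
      intro i _
      rw [← hPQ (xp R n (i+1)), ← hPQ (xp R n i)]
      ring
    -- side B: convergence of the integrals
    have tendB : ∀ (F : StieltjesFunction ℝ), IsFiniteMeasure F.measure →
        Tendsto (fun n => ∫ s, Psi ω R n s ∂F.measure) atTop (nhds (∫ s, ω s ∂F.measure)) := by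
      intro F hFfin
      apply tendsto_integral_of_dominated_convergence (bound := fun _ => c)
      · exact fun n => (Psi_meas n).aestronglyMeasurable
      · exact integrable_const c
      · intro n
        apply Filter.Eventually.of_forall
        intro s
        rw [Real.norm_eq_abs]
        refine le_trans (Psi_bound hR hc n s) ?_
        by_cases h : s ∈ Ioc (-R) R
        · rw [indicator_of_mem h]
        · rw [indicator_of_notMem h]; exact hc0
      · exact Filter.Eventually.of_forall (Psi_tendsto hR hω.continuous hsup2)
    -- side A: convergence of the current values
    have hWlip := W_lip hω.continuous hc hc0
    have hWshlip : LipschitzWith c.toNNReal (fun t => W t - W (-R)) := by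
      intro x y
      simpa [edist_sub_right] using hWlip x y
    have tendA : Tendsto (fun n => T.toFun (cutoff M) (pin ω R n)) atTop
        (nhds (T.toFun (cutoff M) (fun t => W t - W (-R)))) := by
      apply T.continuity (fun _ => cutoff M) (cutoff M) (pin ω R) (fun t => W t - W (-R))
        (1 + c.toNNReal)
      · exact fun _ => (cutoff_lip M).weaken le_self_add
      · exact (cutoff_lip M).weaken le_self_add
      · intro n
        have := lip_comb (n+1) (xp R n) (xp_mono hR n) (fun i => ω (xp R n i)) c hc0
          (fun i => hc _)
        exact this.weaken le_add_self
      · exact hWshlip.weaken le_add_self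
      · exact ⟨Icc (-(M+1)) (M+1), isCompact_Icc, fun _ => cutoff_tsupport hM,
          cutoff_tsupport hM⟩
      · exact fun _ => tendsto_const_nhds
      · intro t
        have e : (fun n => pin ω R n t) =
            fun n => ∫ s, indicator (Iic t) (Psi ω R n) s := funext fun n => int_pin hR n t
        rw [e]
        have e2 : W t - W (-R) = ∫ s, indicator (Iic t) ω s :=
          Wshift_eq hR hω.continuous hsup2 t
        rw [e2]
        apply tendsto_integral_of_dominated_convergence
          (bound := indicator (Ioc (-R) R) (fun _ => c))
        · exact fun n => ((Psi_meas n).indicator measurableSet_Iic).aestronglyMeasurable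
        · exact (integrable_indicator_iff measurableSet_Ioc).2
            ((integrableOn_const_iff (by finiteness)).2 (Or.inr (by rw [Real.volume_Ioc]; exact ENNReal.ofReal_lt_top)))
        · intro n
          apply Filter.Eventually.of_forall
          intro s
          rw [Real.norm_eq_abs]
          by_cases h : s ∈ Iic t
          · rw [indicator_of_mem h]
            exact Psi_bound hR hc n s
          · rw [indicator_of_notMem h, abs_zero]
            exact indicator_nonneg (fun _ _ => hc0) s
        · apply Filter.Eventually.of_forall
          intro s
          by_cases h : s ∈ Iic t
          · simp only [indicator_of_mem h]
            exact Psi_tendsto hR hω.continuous hsup2 s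
          · simp only [indicator_of_notMem h]
            exact tendsto_const_nhds
    -- combine
    have heq : T.toFun (cutoff M) (fun t => W t - W (-R)) =
        (∫ s, ω s ∂P.measure) - ∫ s, ω s ∂Q.measure := by
      apply tendsto_nhds_unique tendA
      have e : (fun n => T.toFun (cutoff M) (pin ω R n)) =
          fun n => (∫ s, Psi ω R n s ∂P.measure) - ∫ s, Psi ω R n s ∂Q.measure :=
        funext key1
      rw [e]
      exact (tendB P hPfin).sub (tendB Q hQfin)
    have hTW : T.toFun (cutoff M) W = T.toFun (cutoff M) (fun t => W t - W (-R)) := by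
      have h := T_shift T (chi_lip_ex M) (chi_bdd_ex M) (fun t => W t - W (-R))
        ⟨c.toNNReal, hWshlip⟩ (W (-R))
      have e : (fun t => (W t - W (-R)) + W (-R)) = W := funext fun t => by ring
      rw [e] at h
      exact h
    rw [T1χ W ⟨c.toNNReal, hWlip⟩, hTW, heq]
end

section
/- Let k ∈ {1, …, d−1} and suppose ω = Σ_I ω_I dx^I is a Lipschitz differential k-form on [0,1]^d (each ω_I Lipschitz) with dω = η a.e., where η = η₁ dx₁ ∧ ⋯ ∧ dx_{k+1} and η₁ ∈ L^∞ depends only on the first k+1 coordinates. Then, setting π_i : [0,1]^{k+1} → ℝ^{k+1} by π_i^i = (−1)^{i−1} ω_{I^i}|_{[0,1]^{k+1}} and π_i^j = x_j for j ≠ i (where I^i = (1,…,i−1,i+1,…,k+1)), the maps π₁, …, π_{k+1} are Lipschitz and satisfy Σ_{i=1}^{k+1} det Dπ_i = η₁ a.e. on almost every (k+1)-dimensional coordinate section, in particular on at least one such section. Hence non-existence of Lipschitz solutions of the sum-of-Jacobians equation in dimension k+1 implies non-existence of Lipschitz solutions ω of dω = η. -/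
open MeasureTheory
open scoped NNReal BigOperators

/-! Since `π_i` differs from the identity only in its `i`-th coordinate, its Jacobian matrix is
the identity with the `i`-th row replaced by the gradient of `(-1)^i w_i(·, y)`, so that
`det Dπ_i = (-1)^i ∂_i w_i(·, y)` wherever `w_i` is differentiable. Summing over `i`, the
projected equation becomes `Σ_i det Dπ_i = η`; by Rademacher's theorem and Fubini it holds
on almost every section. -/

theorem Matrix.det_updateRow_one {n R : Type*} [Fintype n] [DecidableEq n] [CommRing R]
    (i : n) (r : n → R) : (Matrix.updateRow (1 : Matrix n n R) i r).det = r i := by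
  rw [← Matrix.det_transpose, ← Matrix.updateCol_transpose, Matrix.transpose_one,
    ← Matrix.cramer_apply, Matrix.cramer_one]
  rfl

theorem LipschitzWith.pi {ι α : Type*} [Fintype ι] {β : ι → Type*} [PseudoEMetricSpace α]
    [∀ i, PseudoEMetricSpace (β i)] {f : α → ∀ i, β i} {K : ℝ≥0}
    (hf : ∀ i, LipschitzWith K fun a => f a i) : LipschitzWith K f :=
  fun x y => edist_pi_le_iff.2 fun i => hf i x y

theorem LipschitzWith.update_self {ι : Type*} [Fintype ι] [DecidableEq ι] {β : ι → Type*}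
    [∀ i, PseudoEMetricSpace (β i)] {i : ι} {g : (∀ j, β j) → β i} {K : ℝ≥0}
    (hg : LipschitzWith K g) : LipschitzWith (max 1 K) fun x => Function.update x i (g x) := by
  refine LipschitzWith.pi fun j => ?_
  rcases eq_or_ne j i with rfl | hj
  · simpa using hg.weaken (le_max_right _ _)
  · simpa [hj] using (LipschitzWith.eval (α := β) j).weaken (le_max_left _ _)

section UpdateCoordinate

variable {𝕜 ι : Type*} [NontriviallyNormedField 𝕜] [DecidableEq ι]

namespace ContinuousLinearMap

def updateCoord (i : ι) (L : (ι → 𝕜) →L[𝕜] 𝕜) : (ι → 𝕜) →L[𝕜] (ι → 𝕜) :=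
  pi (Function.update (proj (R := 𝕜)) i L)

theorem updateCoord_apply (i : ι) (L : (ι → 𝕜) →L[𝕜] 𝕜) (v : ι → 𝕜) :
    updateCoord i L v = Function.update v i (L v) := by
  ext j
  rcases eq_or_ne j i with rfl | hj <;> simp [updateCoord, *]

variable [Fintype ι]

theorem det_updateCoord (i : ι) (L : (ι → 𝕜) →L[𝕜] 𝕜) :
    (updateCoord i L).det = L (Pi.single i 1) := by
  rw [ContinuousLinearMap.det, ← LinearMap.det_toMatrix (Pi.basisFun 𝕜 ι)]
  have : LinearMap.toMatrix (Pi.basisFun 𝕜 ι) (Pi.basisFun 𝕜 ι) (updateCoord i L).toLinearMap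
      = Matrix.updateRow 1 i fun j => L (Pi.single j 1) := by
    ext a b
    rcases eq_or_ne a i with rfl | ha <;>
      simp [updateCoord_apply, Matrix.one_apply, Pi.single_apply, *]
  rw [this, Matrix.det_updateRow_one]

end ContinuousLinearMap

variable [Fintype ι] {g : (ι → 𝕜) → 𝕜} {L : (ι → 𝕜) →L[𝕜] 𝕜} {x : ι → 𝕜}

theorem HasFDerivAt.update_self (hg : HasFDerivAt g L x) (i : ι) :
    HasFDerivAt (fun x => Function.update x i (g x)) (ContinuousLinearMap.updateCoord i L) x := by
  refine hasFDerivAt_pi'.2 fun j => ?_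
  rcases eq_or_ne j i with rfl | hj
  · simpa [ContinuousLinearMap.updateCoord] using hg
  · simpa [ContinuousLinearMap.updateCoord, hj] using hasFDerivAt_apply j x

theorem HasFDerivAt.det_fderiv_update_self (hg : HasFDerivAt g L x) (i : ι) :
    (fderiv 𝕜 (fun x => Function.update x i (g x)) x).det = L (Pi.single i 1) := by
  rw [(hg.update_self i).fderiv, ContinuousLinearMap.det_updateCoord]

end UpdateCoordinate

theorem MeasureTheory.Measure.ae_ae_of_ae_prod_swap {α β : Type*} [MeasurableSpace α]
    [MeasurableSpace β] {μ : Measure α} {ν : Measure β} [SFinite μ] [SFinite ν] {p : α × β → Prop}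
    (h : ∀ᵐ z ∂μ.prod ν, p z) : ∀ᵐ y ∂ν, ∀ᵐ x ∂μ, p (x, y) :=
  Measure.ae_ae_of_ae_prod (p := fun z => p z.swap)
    (Measure.measurePreserving_swap.quasiMeasurePreserving.tendsto_ae.eventually h)

/-- Here `w j = ω_{I^j}` on `ℝ^{k+1} × ℝ^m`, `heq` is `dω = η` projected onto
`dx₁ ∧ ⋯ ∧ dx_{k+1}`, and indices are `0`-based, so `(-1)^j` is the paper's `(−1)^{j−1}`. -/
theorem statement18_general (k m : ℕ)
    (w : Fin (k + 1) → ((Fin (k + 1) → ℝ) × (Fin m → ℝ)) → ℝ)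
    (hw : ∀ j, ∃ C : ℝ≥0, LipschitzWith C (w j))
    (η : (Fin (k + 1) → ℝ) → ℝ)
    (A : Set (Fin (k + 1) → ℝ))
    (B : Set (Fin m → ℝ))
    (heq : ∀ᵐ p ∂(volume.restrict (A ×ˢ B)),
      ∑ j : Fin (k + 1),
        (-1 : ℝ) ^ (j : ℕ) * fderiv ℝ (w j) p ((Pi.single j 1 : Fin (k + 1) → ℝ), 0)
        = η p.1) :
    ∀ᵐ y ∂(volume.restrict B),
      (∀ i : Fin (k + 1), ∃ C : ℝ≥0,
        LipschitzWith C fun x : Fin (k + 1) → ℝ =>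
          Function.update x i ((-1 : ℝ) ^ (i : ℕ) * w i (x, y))) ∧
      ∀ᵐ x ∂(volume.restrict A),
        ∑ i : Fin (k + 1),
          (fderiv ℝ (fun x' : Fin (k + 1) → ℝ =>
            Function.update x' i ((-1 : ℝ) ^ (i : ℕ) * w i (x', y))) x).det
          = η x := by
  have : (volume : Measure ((Fin (k + 1) → ℝ) × (Fin m → ℝ))).IsAddHaarMeasure := by
    rw [Measure.volume_eq_prod]; exact Measure.prod.instIsAddHaarMeasure _ _
  have hdiff : ∀ᵐ p ∂volume, ∀ j, DifferentiableAt ℝ (w j) p :=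
    ae_all_iff.2 fun j => (hw j).choose_spec.ae_differentiableAt
  have hprod := (ae_restrict_of_ae hdiff).and heq
  rw [Measure.volume_eq_prod, ← Measure.prod_restrict] at hprod
  have hsection := Measure.ae_ae_of_ae_prod_swap hprod
  filter_upwards [hsection] with y hy
  refine ⟨fun i => ?_, ?_⟩
  · obtain ⟨C, hC⟩ := hw i
    have hslice : LipschitzWith (‖(-1 : ℝ) ^ (i : ℕ)‖₊ * (C * 1))
        fun x : Fin (k + 1) → ℝ => (-1 : ℝ) ^ (i : ℕ) * w i (x, y) :=
      (lipschitzWith_smul _).comp (hC.comp (LipschitzWith.prodMk_right y))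
    exact ⟨_, hslice.update_self⟩
  · filter_upwards [hy] with x ⟨hdx, hsum⟩
    rw [← hsum]
    refine Finset.sum_congr rfl fun i _ => ?_
    have hslice := ((hdx i).hasFDerivAt.comp x
      (hasFDerivAt_prodMk_left (𝕜 := ℝ) x y)).const_mul ((-1 : ℝ) ^ (i : ℕ))
    simpa using hslice.det_fderiv_update_self i

/-- Let `1 ≤ k ≤ d − 1`, write `d = (k+1) + m`, and suppose
`ω = Σ_I ω_I dx^I` is a Lipschitz `k`-form on `[0,1]^d` satisfying `dω = η` a.e.,
where `η = η₁ dx₁ ∧ ⋯ ∧ dx_{k+1}` with `η₁ ∈ L^∞` depending only on the first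
`k+1` coordinates.  Projecting `dω = η` onto `dx₁ ∧ ⋯ ∧ dx_{k+1}` gives (with
`w j = ω_{I^j}`) the a.e. identity `Σ_j (−1)^{j−1} ∂w_j/∂x_j = η₁` on
`[0,1]^{k+1} × [0,1]^m`; this is the hypothesis `heq` below.  Then, setting
`π_i : [0,1]^{k+1} → ℝ^{k+1}`, `π_i^i = (−1)^{i−1} w_i(·, y)` and `π_i^j = x_j`
for `j ≠ i`, for almost every section parameter `y` the maps `π_i` are Lipschitz
and satisfy `Σ_i det Dπ_i = η₁` a.e. on `[0,1]^{k+1}`. -/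
theorem statement18 (k m : ℕ) (hk : 1 ≤ k)
    (w : Fin (k + 1) → ((Fin (k + 1) → ℝ) × (Fin m → ℝ)) → ℝ)
    (hw : ∀ j, ∃ C : ℝ≥0, LipschitzWith C (w j))
    (η : (Fin (k + 1) → ℝ) → ℝ)
    (hη : Measurable η) (hηb : ∃ C : ℝ, ∀ x, |η x| ≤ C)
    (A : Set (Fin (k + 1) → ℝ)) (hA : A = {x | ∀ j, 0 ≤ x j ∧ x j ≤ 1})
    (B : Set (Fin m → ℝ)) (hB : B = {y | ∀ j, 0 ≤ y j ∧ y j ≤ 1})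
    (heq : ∀ᵐ p ∂(volume.restrict (A ×ˢ B)),
      ∑ j : Fin (k + 1),
        (-1 : ℝ) ^ (j : ℕ) * fderiv ℝ (w j) p ((Pi.single j 1 : Fin (k + 1) → ℝ), 0)
        = η p.1) :
    ∀ᵐ y ∂(volume.restrict B),
      (∀ i : Fin (k + 1), ∃ C : ℝ≥0,
        LipschitzWith C fun x : Fin (k + 1) → ℝ =>
          Function.update x i ((-1 : ℝ) ^ (i : ℕ) * w i (x, y))) ∧
      ∀ᵐ x ∂(volume.restrict A),
        ∑ i : Fin (k + 1),
          (fderiv ℝ (fun x' : Fin (k + 1) → ℝ =>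
            Function.update x' i ((-1 : ℝ) ^ (i : ℕ) * w i (x', y))) x).det
          = η x :=
  statement18_general k m w hw η A B heq
end
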